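/- arXiv:2305.11783 — 5 statements merged into one kernel-verified Lean document; each statement's English description precedes it below -/
import Mathlib

section
/- Let N ≥ 1, T > 0, and let X : [0, T] × ℝ^N → ℝ^N be continuous and Lipschitz in the second variable with Lipschitz constant C_X uniformly in t. Let γ, μ : [0, T] → ℝ^N be C¹ functions with μ'(τ) = X(τ, μ(τ)) for all τ. Then for every t ∈ [0, T] with C_X · t ≤ 1/2 one has: sup_{0 ≤ τ ≤ t} |γ(τ) − μ(τ)| ≤ 2 |γ(0) − μ(0)| + 2 t^{1/2} ( ∫₀^t |γ'(τ) − X(τ, γ(τ))|² dτ )^{1/2}. -/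
/-!
Let `M` be the maximum of `‖γ - μ‖` on `[0, t]`, attained at `τ₀`. Integrating
`(γ - μ)' = (γ' - X(γ)) + (X(γ) - X(μ))` over `[0, τ₀]`, the first term contributes at most
`√t ‖γ' - X(γ)‖_{L²}` by Cauchy–Schwarz and the second at most `C_X t M ≤ M / 2` by the Lipschitz
bound, so `M ≤ ‖γ 0 - μ 0‖ + √t ‖γ' - X(γ)‖_{L²} + M / 2`. A negative `C_X` may be replaced by `0`.
-/

open MeasureTheory Set

theorem ContinuousOn.comp_uncurry_curve {α β δ : Type*} [TopologicalSpace α]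
    [TopologicalSpace β] [TopologicalSpace δ] {X : α → β → δ} {s : Set α} {f : α → β}
    (hX : ContinuousOn (Function.uncurry X) (s ×ˢ univ)) (hf : ContinuousOn f s) :
    ContinuousOn (fun σ => X σ (f σ)) s :=
  hX.comp (continuousOn_id.prodMk hf) fun _ hσ => ⟨hσ, mem_univ _⟩

namespace intervalIntegral

theorem sq_integral_le_mul_integral_sq {u : ℝ → ℝ} {a b : ℝ} (hab : a ≤ b)
    (hu : IntervalIntegrable u volume a b)
    (hu2 : IntervalIntegrable (fun x => u x ^ 2) volume a b) :
    (∫ x in a..b, u x) ^ 2 ≤ (b - a) * ∫ x in a..b, u x ^ 2 := by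
  have hquad : ∀ c : ℝ,
      0 ≤ (b - a) * (c * c) + (-2 * ∫ x in a..b, u x) * c + ∫ x in a..b, u x ^ 2 := by
    intro c
    have hexp : ∫ x in a..b, (u x - c) ^ 2
        = (∫ x in a..b, u x ^ 2) - 2 * c * (∫ x in a..b, u x) + (b - a) * c ^ 2 := by
      simp only [sub_sq]
      rw [integral_add (hu2.sub ((hu.const_mul 2).mul_const c)) intervalIntegrable_const,
        integral_sub hu2 ((hu.const_mul 2).mul_const c), integral_mul_const,
        integral_const_mul, integral_const, smul_eq_mul]
      ring
    have hnonneg : 0 ≤ ∫ x in a..b, (u x - c) ^ 2 := integral_nonneg hab fun _ _ => sq_nonneg _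
    linarith
  have := discrim_le_zero hquad
  rw [discrim] at this
  linarith

theorem integral_le_sqrt_mul_sqrt_integral_sq {u : ℝ → ℝ} {a b c : ℝ} (hab : a ≤ b)
    (hbc : b ≤ c) (hu : ContinuousOn u (Icc a c)) :
    ∫ x in a..b, u x ≤ √(c - a) * √(∫ x in a..c, u x ^ 2) := by
  have hu_ab : ContinuousOn u (Icc a b) := hu.mono (Icc_subset_Icc_right hbc)
  have hsq := sq_integral_le_mul_integral_sq hab (hu_ab.intervalIntegrable_of_Icc hab)
    ((hu_ab.pow 2).intervalIntegrable_of_Icc hab)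
  calc ∫ x in a..b, u x ≤ |∫ x in a..b, u x| := le_abs_self _
    _ ≤ √((b - a) * ∫ x in a..b, u x ^ 2) := Real.abs_le_sqrt hsq
    _ = √(b - a) * √(∫ x in a..b, u x ^ 2) := Real.sqrt_mul (sub_nonneg.2 hab) _
    _ ≤ √(c - a) * √(∫ x in a..c, u x ^ 2) := by
      gcongr
      exact integral_mono_interval le_rfl hab hbc (Filter.Eventually.of_forall fun _ => sq_nonneg _)
        ((hu.pow 2).intervalIntegrable_of_Icc (hab.trans hbc))

end intervalIntegral

section

variable {E : Type*} [NormedAddCommGroup E] [NormedSpace ℝ E] [CompleteSpace E]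

theorem norm_sub_le_integral_norm_deriv {f f' : ℝ → E} {a b : ℝ} (hab : a ≤ b)
    (hf : ∀ x ∈ Icc a b, HasDerivAt f (f' x) x) (hf' : ContinuousOn f' (Icc a b)) :
    ‖f b - f a‖ ≤ ∫ x in a..b, ‖f' x‖ := by
  rw [← intervalIntegral.integral_eq_sub_of_hasDerivAt (by rwa [uIcc_of_le hab])
    (hf'.intervalIntegrable_of_Icc hab)]
  exact intervalIntegral.norm_integral_le_integral_norm hab

theorem norm_sub_le_of_approx_solution {X : ℝ → E → E} {γ γ' μ : ℝ → E} {K M a b : ℝ}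
    (hab : a ≤ b) (hK : 0 ≤ K) (hX : ContinuousOn (Function.uncurry X) (Icc a b ×ˢ univ))
    (hγ : ∀ σ ∈ Icc a b, HasDerivAt γ (γ' σ) σ) (hγ' : ContinuousOn γ' (Icc a b))
    (hμ : ∀ σ ∈ Icc a b, HasDerivAt μ (X σ (μ σ)) σ)
    (hlip : ∀ σ ∈ Icc a b, ‖X σ (γ σ) - X σ (μ σ)‖ ≤ K * ‖γ σ - μ σ‖)
    (hM : ∀ σ ∈ Icc a b, ‖γ σ - μ σ‖ ≤ M) :
    ‖γ b - μ b‖ ≤ ‖γ a - μ a‖ + (∫ σ in a..b, ‖γ' σ - X σ (γ σ)‖) + K * (b - a) * M := by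
  have hγc : ContinuousOn γ (Icc a b) := fun σ hσ => (hγ σ hσ).continuousAt.continuousWithinAt
  have hμc : ContinuousOn μ (Icc a b) := fun σ hσ => (hμ σ hσ).continuousAt.continuousWithinAt
  have herr : ContinuousOn (fun σ => γ' σ - X σ (γ σ)) (Icc a b) :=
    hγ'.sub (hX.comp_uncurry_curve hγc)
  have hpointwise : ∀ σ ∈ Icc a b,
      ‖γ' σ - X σ (μ σ)‖ ≤ ‖γ' σ - X σ (γ σ)‖ + K * M := fun σ hσ =>
    calc ‖γ' σ - X σ (μ σ)‖ = ‖(γ' σ - X σ (γ σ)) + (X σ (γ σ) - X σ (μ σ))‖ := by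
          rw [sub_add_sub_cancel]
      _ ≤ ‖γ' σ - X σ (γ σ)‖ + ‖X σ (γ σ) - X σ (μ σ)‖ := norm_add_le _ _
      _ ≤ ‖γ' σ - X σ (γ σ)‖ + K * M := by
          gcongr
          exact (hlip σ hσ).trans (mul_le_mul_of_nonneg_left (hM σ hσ) hK)
  have hFTC : ‖(γ b - μ b) - (γ a - μ a)‖ ≤ ∫ σ in a..b, ‖γ' σ - X σ (μ σ)‖ :=
    norm_sub_le_integral_norm_deriv (f := fun σ => γ σ - μ σ) hab
      (fun σ hσ => (hγ σ hσ).sub (hμ σ hσ)) (hγ'.sub (hX.comp_uncurry_curve hμc))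
  have hint : ∫ σ in a..b, ‖γ' σ - X σ (μ σ)‖
      ≤ (∫ σ in a..b, ‖γ' σ - X σ (γ σ)‖) + K * (b - a) * M := by
    calc ∫ σ in a..b, ‖γ' σ - X σ (μ σ)‖ ≤ ∫ σ in a..b, (‖γ' σ - X σ (γ σ)‖ + K * M) :=
          intervalIntegral.integral_mono_on hab
            ((hγ'.sub (hX.comp_uncurry_curve hμc)).norm.intervalIntegrable_of_Icc hab)
            (herr.norm.intervalIntegrable_of_Icc hab |>.add intervalIntegrable_const) hpointwise
      _ = (∫ σ in a..b, ‖γ' σ - X σ (γ σ)‖) + K * (b - a) * M := by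
          rw [intervalIntegral.integral_add (herr.norm.intervalIntegrable_of_Icc hab)
            intervalIntegrable_const, intervalIntegral.integral_const, smul_eq_mul]
          ring
  calc ‖γ b - μ b‖ ≤ ‖γ a - μ a‖ + ‖(γ b - μ b) - (γ a - μ a)‖ := norm_le_norm_add_norm_sub' _ _
    _ ≤ _ := by linarith

end

theorem stmt_2_general (N : ℕ) (T : ℝ)
    (X : ℝ → EuclideanSpace ℝ (Fin N) → EuclideanSpace ℝ (Fin N))
    (hXcont : ContinuousOn (Function.uncurry X) (Icc 0 T ×ˢ univ))
    (CX : ℝ)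
    (hXlip : ∀ t ∈ Icc (0:ℝ) T, ∀ x y : EuclideanSpace ℝ (Fin N),
      ‖X t x - X t y‖ ≤ CX * ‖x - y‖)
    (γ μ : ℝ → EuclideanSpace ℝ (Fin N))
    (hγ : ContDiff ℝ 1 γ)
    (hμODE : ∀ τ ∈ Icc (0:ℝ) T, HasDerivAt μ (X τ (μ τ)) τ) :
    ∀ t ∈ Icc (0:ℝ) T, CX * t ≤ 1 / 2 →
      ∀ τ ∈ Icc (0:ℝ) t,
        ‖γ τ - μ τ‖ ≤ 2 * ‖γ 0 - μ 0‖ +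
          2 * Real.sqrt t * Real.sqrt (∫ σ in (0:ℝ)..t, ‖deriv γ σ - X σ (γ σ)‖ ^ 2) := by
  intro t ht hCXt τ hτ
  have hsub : Icc 0 t ⊆ Icc 0 T := Icc_subset_Icc_right ht.2
  have hK : 0 ≤ max CX 0 := le_max_right _ _
  have hKt : max CX 0 * t ≤ 1 / 2 := by
    rw [max_mul_of_nonneg _ _ ht.1, zero_mul]
    exact max_le hCXt (by norm_num)
  have hμc : ContinuousOn μ (Icc 0 t) := fun σ hσ =>
    (hμODE σ (hsub hσ)).continuousAt.continuousWithinAt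
  have hγ' : Continuous (deriv γ) := hγ.continuous_deriv le_rfl
  obtain ⟨τ₀, hτ₀, hmax⟩ : ∃ τ₀ ∈ Icc 0 t, ∀ σ ∈ Icc 0 t, ‖γ σ - μ σ‖ ≤ ‖γ τ₀ - μ τ₀‖ :=
    isCompact_Icc.exists_isMaxOn (nonempty_Icc.2 ht.1) (hγ.continuous.continuousOn.sub hμc).norm
  have hsub₀ : Icc 0 τ₀ ⊆ Icc 0 t := Icc_subset_Icc_right hτ₀.2
  have hmax_le := norm_sub_le_of_approx_solution (K := max CX 0) hτ₀.1 hK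
    (hXcont.mono (prod_mono (hsub₀.trans hsub) subset_rfl))
    (fun σ _ => (hγ.differentiable one_ne_zero σ).hasDerivAt) hγ'.continuousOn
    (fun σ hσ => hμODE σ (hsub (hsub₀ hσ)))
    (fun σ hσ => (hXlip σ (hsub (hsub₀ hσ)) _ _).trans
      (mul_le_mul_of_nonneg_right (le_max_left _ _) (norm_nonneg _)))
    (fun σ hσ => hmax σ (hsub₀ hσ))
  have hCS := intervalIntegral.integral_le_sqrt_mul_sqrt_integral_sq
    (u := fun σ => ‖deriv γ σ - X σ (γ σ)‖) hτ₀.1 hτ₀.2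
    ((hγ'.continuousOn.sub (hXcont.comp_uncurry_curve hγ.continuous.continuousOn)).norm.mono hsub)
  have hdrift : max CX 0 * (τ₀ - 0) * ‖γ τ₀ - μ τ₀‖ ≤ ‖γ τ₀ - μ τ₀‖ / 2 := by
    have : max CX 0 * τ₀ ≤ 1 / 2 := (mul_le_mul_of_nonneg_left hτ₀.2 hK).trans hKt
    rw [sub_zero]
    nlinarith [norm_nonneg (γ τ₀ - μ τ₀)]
  rw [sub_zero] at hCS
  have hsqrt : 0 ≤ √t * √(∫ σ in (0:ℝ)..t, ‖deriv γ σ - X σ (γ σ)‖ ^ 2) := by positivity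
  linarith [hmax τ hτ]

/-- Quantitative Gronwall-type estimate: if `μ` is an integral curve of `X` and
`γ` is any `C¹` curve, then for `C_X · t ≤ 1/2`,
`sup_{0≤τ≤t} |γ(τ) − μ(τ)| ≤ 2|γ(0) − μ(0)| + 2 t^{1/2} (∫₀ᵗ |γ' − X(τ,γ)|² dτ)^{1/2}`. -/
theorem stmt_2 (N : ℕ) (hN : 1 ≤ N) (T : ℝ) (hT : 0 < T)
    (X : ℝ → EuclideanSpace ℝ (Fin N) → EuclideanSpace ℝ (Fin N))
    (hXcont : ContinuousOn (Function.uncurry X) (Icc 0 T ×ˢ univ))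
    (CX : ℝ)
    (hXlip : ∀ t ∈ Icc (0:ℝ) T, ∀ x y : EuclideanSpace ℝ (Fin N),
      ‖X t x - X t y‖ ≤ CX * ‖x - y‖)
    (γ μ : ℝ → EuclideanSpace ℝ (Fin N))
    (hγ : ContDiff ℝ 1 γ) (hμ : ContDiff ℝ 1 μ)
    (hμODE : ∀ τ ∈ Icc (0:ℝ) T, HasDerivAt μ (X τ (μ τ)) τ) :
    ∀ t ∈ Icc (0:ℝ) T, CX * t ≤ 1 / 2 →
      ∀ τ ∈ Icc (0:ℝ) t,
        ‖γ τ - μ τ‖ ≤ 2 * ‖γ 0 - μ 0‖ +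
          2 * Real.sqrt t * Real.sqrt (∫ σ in (0:ℝ)..t, ‖deriv γ σ - X σ (γ σ)‖ ^ 2) :=
  stmt_2_general N T X hXcont CX hXlip γ μ hγ hμODE
end

section
/- Let N ≥ 1 and let X : ℝ/ℤ × ℝ^N → ℝ^N be continuous and Lipschitz in the second variable uniformly in t. Let γ_n : ℝ/ℤ → ℝ^N be a sequence of C¹ loops converging uniformly to a continuous loop γ_∞, and suppose that ∫₀¹ |γ_n'(t) − X(t, γ_n(t))|² dt → 0 as n → ∞. Then γ_∞ is continuously differentiable and satisfies γ_∞'(t) = X(t, γ_∞(t)) for all t; in particular γ_∞ is a 1-periodic integral curve of X. -/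
/-!
By Cauchy–Schwarz the `L²`-defect `γₙ' − X(·, γₙ)` tends to zero in `L¹` on a period, hence, by
periodicity, in `L¹` on every bounded interval. Integrating, `γₙ t − γₙ a − ∫ₐᵗ X(s, γₙ s) ds → 0`,
while the Lipschitz bound makes `X(·, γₙ)` converge uniformly to `X(·, γ∞)`. So `γ∞` satisfies the
integral equation `γ∞ t = γ∞ a + ∫ₐᵗ X(s, γ∞ s) ds`, and the fundamental theorem of calculus makes
it a `C¹` integral curve of `X`.
-/

open MeasureTheory Set Filter

open scoped NNReal Topology

theorem sq_intervalIntegral_le_mul_integral_sq {f : ℝ → ℝ} (hf : Continuous f) {a b : ℝ}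
    (hab : a < b) : (∫ x in a..b, f x) ^ 2 ≤ (b - a) * ∫ x in a..b, f x ^ 2 := by
  have hvol : volume (Ioc a b) = ENNReal.ofReal (b - a) := Real.volume_Ioc
  have jensen := (even_two.convexOn_pow (𝕜 := ℝ)).map_set_average_le (continuousOn_pow 2)
    isClosed_univ (μ := volume) (t := Ioc a b) (by simpa [hvol] using hab) (by simp [hvol])
    (by simp) hf.integrableOn_Ioc (hf.pow 2).integrableOn_Ioc
  have hba : 0 < b - a := sub_pos.2 hab
  simp only [setAverage_eq, measureReal_def, hvol, ENNReal.toReal_ofReal hba.le, smul_eq_mul,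
    ← div_eq_inv_mul, div_pow] at jensen
  rw [div_le_div_iff₀ (by positivity) hba] at jensen
  rw [intervalIntegral.integral_of_le hab.le, intervalIntegral.integral_of_le hab.le]
  nlinarith

theorem Function.Periodic.abs_intervalIntegral_le_ceil_mul {g : ℝ → ℝ} {T : ℝ}
    (hg : Function.Periodic g T) (hT : 0 < T) (hg0 : 0 ≤ g) (hgc : Continuous g) (a b : ℝ) :
    |∫ x in a..b, g x| ≤ ⌈|b - a| / T⌉₊ * ∫ x in 0..T, g x := by
  set n := ⌈|b - a| / T⌉₊
  have hcover : max a b ≤ min a b + (n : ℤ) • T := by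
    have : |b - a| ≤ n * T := (div_le_iff₀ hT).1 (Nat.le_ceil _)
    rw [natCast_zsmul, nsmul_eq_mul]
    linarith [max_sub_min_eq_abs a b]
  have hsub : uIoc a b ⊆ uIoc (min a b) (min a b + (n : ℤ) • T) := by
    rw [uIoc_of_le (min_le_max.trans hcover)]
    exact Ioc_subset_Ioc_right hcover
  calc |∫ x in a..b, g x|
      ≤ |∫ x in min a b..min a b + (n : ℤ) • T, g x| :=
        intervalIntegral.abs_integral_mono_interval hsub (Eventually.of_forall hg0)
          (hgc.intervalIntegrable _ _)
    _ = n * ∫ x in 0..T, g x := by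
        rw [hg.intervalIntegral_add_zsmul_eq n _ (fun _ _ => hgc.intervalIntegrable _ _),
          hg.intervalIntegral_add_eq _ 0, zero_add, natCast_zsmul, nsmul_eq_mul, abs_of_nonneg]
        exact mul_nonneg n.cast_nonneg (intervalIntegral.integral_nonneg hT.le fun x _ => hg0 x)

theorem tendsto_intervalIntegral_of_tendsto_integral_period
    {g : ℕ → ℝ → ℝ} {T : ℝ} (hg : ∀ n, Function.Periodic (g n) T) (hT : 0 < T)
    (hg0 : ∀ n, 0 ≤ g n) (hgc : ∀ n, Continuous (g n))
    (hlim : Tendsto (fun n => ∫ x in 0..T, g n x) atTop (𝓝 0)) (a b : ℝ) :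
    Tendsto (fun n => ∫ x in a..b, g n x) atTop (𝓝 0) := by
  refine squeeze_zero_norm
    (fun n => (hg n).abs_intervalIntegral_le_ceil_mul hT (hg0 n) (hgc n) a b) ?_
  simpa using hlim.const_mul (⌈|b - a| / T⌉₊ : ℝ)

theorem Function.Periodic.deriv {𝕜 F : Type*} [NontriviallyNormedField 𝕜] [NormedAddCommGroup F]
    [NormedSpace 𝕜 F] {f : 𝕜 → F} {c : 𝕜} (hf : Function.Periodic f c) :
    Function.Periodic (deriv f) c := by
  intro t
  rw [← deriv_comp_add_const, hf.funext]

theorem TendstoUniformly.comp_lipschitzWith {ι α E F : Type*} [PseudoMetricSpace E]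
    [PseudoMetricSpace F] {l : Filter ι} {X : α → E → F} {K : ℝ≥0}
    (hX : ∀ t, LipschitzWith K (X t)) {γ : ι → α → E} {γlim : α → E}
    (h : TendstoUniformly γ γlim l) :
    TendstoUniformly (fun n t => X t (γ n t)) (fun t => X t (γlim t)) l := by
  rw [Metric.tendstoUniformly_iff] at h ⊢
  intro ε hε
  filter_upwards [h (ε / (K + 1)) (by positivity)] with n hn t
  calc dist (X t (γlim t)) (X t (γ n t)) ≤ K * dist (γlim t) (γ n t) := (hX t).dist_le_mul _ _
    _ ≤ K * (ε / (K + 1)) := by gcongr; exact (hn t).le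
    _ < ε := by
      rw [mul_div_assoc', div_lt_iff₀ (by positivity)]
      nlinarith

variable {E : Type*} [NormedAddCommGroup E] [NormedSpace ℝ E] [CompleteSpace E]

theorem eq_add_integral_of_tendsto_integral_norm_deriv_sub {X : ℝ → E → E}
    (hXcont : Continuous (Function.uncurry X)) {K : ℝ≥0} (hX : ∀ t, LipschitzWith K (X t))
    {γ : ℕ → ℝ → E} (hγ : ∀ n, ContDiff ℝ 1 (γ n)) {γlim : ℝ → E}
    (hconv : TendstoUniformly γ γlim atTop) {a t : ℝ}
    (hdefect : Tendsto (fun n => ∫ s in a..t, ‖deriv (γ n) s - X s (γ n s)‖) atTop (𝓝 0)) :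
    γlim t = γlim a + ∫ s in a..t, X s (γlim s) := by
  have hXγ : ∀ n, Continuous fun s => X s (γ n s) := fun n =>
    hXcont.comp₂ continuous_id (hγ n).continuous
  have hdefect_eq : ∀ n, γ n t - γ n a - ∫ s in a..t, X s (γ n s)
      = ∫ s in a..t, (deriv (γ n) s - X s (γ n s)) := fun n => by
    rw [intervalIntegral.integral_sub (((hγ n).continuous_deriv le_rfl).intervalIntegrable _ _)
      ((hXγ n).intervalIntegrable _ _), intervalIntegral.integral_deriv_eq_sub
      (fun s _ => ((hγ n).differentiable one_ne_zero) s)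
      (((hγ n).continuous_deriv le_rfl).intervalIntegrable _ _)]
  have hto_zero : Tendsto (fun n => γ n t - γ n a - ∫ s in a..t, X s (γ n s)) atTop (𝓝 0) :=
    squeeze_zero_norm (fun n => (hdefect_eq n).symm ▸
      intervalIntegral.norm_integral_le_abs_integral_norm) (by simpa using hdefect.abs)
  have hto_lim : Tendsto (fun n => γ n t - γ n a - ∫ s in a..t, X s (γ n s)) atTop
      (𝓝 (γlim t - γlim a - ∫ s in a..t, X s (γlim s))) :=
    ((hconv.tendsto_at t).sub (hconv.tendsto_at a)).sub
      ((hconv.comp_lipschitzWith hX).tendstoUniformlyOn.tendsto_intervalIntegral_of_continuousOn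
        (Eventually.of_forall fun n => (hXγ n).continuousOn))
  exact eq_add_of_sub_eq' (sub_eq_zero.1 (tendsto_nhds_unique hto_lim hto_zero))

theorem contDiff_one_and_hasDerivAt_of_eq_add_integral {γ g : ℝ → E} (hg : Continuous g) {a : ℝ}
    (h : ∀ t, γ t = γ a + ∫ s in a..t, g s) :
    ContDiff ℝ 1 γ ∧ ∀ t, HasDerivAt γ (g t) t := by
  have hderiv : ∀ t, HasDerivAt γ (g t) t := fun t => by
    rw [funext h]
    exact ((hg.integral_hasStrictDerivAt a t).hasDerivAt).const_add _
  refine ⟨contDiff_one_iff_deriv.2 ⟨fun t => (hderiv t).differentiableAt, ?_⟩, hderiv⟩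
  rwa [funext fun t => (hderiv t).deriv]

theorem stmt_3_general (N : ℕ)
    (X : ℝ → EuclideanSpace ℝ (Fin N) → EuclideanSpace ℝ (Fin N))
    (hXcont : Continuous (Function.uncurry X))
    (hXper : ∀ x : EuclideanSpace ℝ (Fin N), Function.Periodic (fun t => X t x) 1)
    (CX : ℝ)
    (hXlip : ∀ t : ℝ, ∀ x y : EuclideanSpace ℝ (Fin N),
      ‖X t x - X t y‖ ≤ CX * ‖x - y‖)
    (γ : ℕ → ℝ → EuclideanSpace ℝ (Fin N))
    (hγC1 : ∀ n, ContDiff ℝ 1 (γ n))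
    (hγper : ∀ n, Function.Periodic (γ n) 1)
    (γlim : ℝ → EuclideanSpace ℝ (Fin N))
    (hconv : TendstoUniformly γ γlim atTop)
    (hL2 : Tendsto (fun n => ∫ t in (0:ℝ)..1, ‖deriv (γ n) t - X t (γ n t)‖ ^ 2)
      atTop (nhds 0)) :
    ContDiff ℝ 1 γlim ∧ (∀ t : ℝ, HasDerivAt γlim (X t (γlim t)) t) := by
  have hLip : ∀ t, LipschitzWith CX.toNNReal (X t) := fun t =>
    LipschitzWith.of_dist_le' fun x y => by simpa only [dist_eq_norm] using hXlip t x y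
  set defect : ℕ → ℝ → ℝ := fun n t => ‖deriv (γ n) t - X t (γ n t)‖
  have hdefect_cont : ∀ n, Continuous (defect n) := fun n =>
    (((hγC1 n).continuous_deriv le_rfl).sub
      (hXcont.comp₂ continuous_id (hγC1 n).continuous)).norm
  have hdefect_per : ∀ n, Function.Periodic (defect n) 1 := fun n t => by
    simp only [defect, (hγper n).deriv t, hγper n t, hXper (γ n t) t]
  have hL1 : Tendsto (fun n => ∫ t in (0:ℝ)..1, defect n t) atTop (𝓝 0) := by
    refine squeeze_zero_norm (fun n => Real.abs_le_sqrt ?_) (by simpa using hL2.sqrt)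
    simpa using sq_intervalIntegral_le_mul_integral_sq (hdefect_cont n) zero_lt_one
  have hintegral : ∀ t, γlim t = γlim 0 + ∫ s in (0:ℝ)..t, X s (γlim s) := fun t =>
    eq_add_integral_of_tendsto_integral_norm_deriv_sub hXcont hLip hγC1 hconv
      (tendsto_intervalIntegral_of_tendsto_integral_period hdefect_per zero_lt_one
        (fun n _ => norm_nonneg _) hdefect_cont hL1 0 t)
  have hγlim : Continuous γlim :=
    hconv.continuous (Frequently.of_forall fun n => (hγC1 n).continuous)
  exact contDiff_one_and_hasDerivAt_of_eq_add_integral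
    (hXcont.comp₂ continuous_id hγlim) hintegral

/-- If `γₙ` are `C¹` loops converging uniformly to `γlim` and the `L²`-violation
`∫₀¹ |γₙ' − X(t,γₙ)|² dt → 0`, then `γlim` is a `C¹` 1-periodic integral curve
of `X`. Loops are modelled as 1-periodic functions on `ℝ`. -/
theorem stmt_3 (N : ℕ) (hN : 1 ≤ N)
    (X : ℝ → EuclideanSpace ℝ (Fin N) → EuclideanSpace ℝ (Fin N))
    (hXcont : Continuous (Function.uncurry X))
    (hXper : ∀ x : EuclideanSpace ℝ (Fin N), Function.Periodic (fun t => X t x) 1)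
    (CX : ℝ)
    (hXlip : ∀ t : ℝ, ∀ x y : EuclideanSpace ℝ (Fin N),
      ‖X t x - X t y‖ ≤ CX * ‖x - y‖)
    (γ : ℕ → ℝ → EuclideanSpace ℝ (Fin N))
    (hγC1 : ∀ n, ContDiff ℝ 1 (γ n))
    (hγper : ∀ n, Function.Periodic (γ n) 1)
    (γlim : ℝ → EuclideanSpace ℝ (Fin N))
    (hγlimcont : Continuous γlim)
    (hγlimper : Function.Periodic γlim 1)
    (hconv : TendstoUniformly γ γlim atTop)
    (hL2 : Tendsto (fun n => ∫ t in (0:ℝ)..1, ‖deriv (γ n) t - X t (γ n t)‖ ^ 2)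
      atTop (nhds 0)) :
    ContDiff ℝ 1 γlim ∧ (∀ t : ℝ, HasDerivAt γlim (X t (γlim t)) t) :=
  stmt_3_general N X hXcont hXper CX hXlip γ hγC1 hγper γlim hconv hL2
end

section
/- Let f : ℝ/ℤ → ℝ be continuous with f(t) < 0 for all t, and set κ = ∫₀¹ f(t) dt. Then for every δ > 0 there exists a smooth orientation-preserving diffeomorphism τ : ℝ/ℤ → ℝ/ℤ (i.e., a smooth map lifting to an increasing smooth function τ : ℝ → ℝ with τ(t+1) = τ(t) + 1) such that κ − δ ≤ τ'(t) · f(τ(t)) ≤ κ + δ for all t. -/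
open MeasureTheory Set

section aux

/-- Fourier approximation of a real periodic continuous function. -/
lemma aux_fourier_approx (f : ℝ → ℝ) (hf : Continuous f) (hfper : Function.Periodic f 1)
    (ε : ℝ) (hε : 0 < ε) :
    ∃ d : ℤ →₀ ℂ, ∀ t : ℝ,
      ‖(∑ n ∈ d.support, d n * Complex.exp (2 * Real.pi * Complex.I * n * t)) - (f t : ℂ)‖ ≤ ε := by
  haveI : Fact ((0:ℝ) < 1) := ⟨one_pos⟩
  have hcont : Continuous (hfper.lift) := by
    rw [continuous_coinduced_dom]
    exact hf
  set F : C(AddCircle (1:ℝ), ℂ) := ⟨fun x => (hfper.lift x : ℂ), by continuity⟩ with hF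
  have hmem : F ∈ closure ((Submodule.span ℂ (Set.range (@fourier 1))) : Set C(AddCircle (1:ℝ), ℂ)) := by
    rw [← Submodule.topologicalClosure_coe, span_fourier_closure_eq_top]
    trivial
  rw [Metric.mem_closure_iff] at hmem
  obtain ⟨q, hq, hdq⟩ := hmem ε hε
  rw [SetLike.mem_coe, Finsupp.mem_span_range_iff_exists_finsupp] at hq
  obtain ⟨d, hd⟩ := hq
  refine ⟨d, fun t => ?_⟩
  have h1 : q ((t : AddCircle (1:ℝ))) = ∑ n ∈ d.support, d n * Complex.exp (2 * Real.pi * Complex.I * n * t) := by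
    rw [← hd, Finsupp.sum, ContinuousMap.sum_apply]
    refine Finset.sum_congr rfl fun n _ => ?_
    rw [ContinuousMap.smul_apply, fourier_coe_apply]
    rw [smul_eq_mul]
    push_cast
    ring_nf
  have h2 : dist (F (t : AddCircle (1:ℝ))) (q (t : AddCircle (1:ℝ))) ≤ dist F q :=
    ContinuousMap.dist_apply_le_dist _
  have h3 : F ((t:ℝ) : AddCircle (1:ℝ)) = (f t : ℂ) := by
    simp [hF, hfper.lift_coe]
  rw [h3, h1] at h2
  rw [norm_sub_rev]
  calc ‖(f t : ℂ) - _‖ = dist (f t : ℂ) _ := by rw [dist_eq_norm]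
    _ ≤ dist F q := h2
    _ ≤ ε := le_of_lt hdq

end aux

/-- Generalized constant speed parametrization: for a continuous negative
1-periodic `f` with `κ = ∫₀¹ f`, and any `δ > 0`, there is a smooth
orientation-preserving circle diffeomorphism `τ` (a smooth increasing map
`ℝ → ℝ` with `τ(t+1) = τ(t)+1`) with `κ−δ ≤ τ'(t)·f(τ(t)) ≤ κ+δ` for all `t`. -/
theorem stmt_5 (f : ℝ → ℝ) (hf : Continuous f) (hfper : Function.Periodic f 1)
    (hfneg : ∀ t, f t < 0) (κ : ℝ) (hκ : κ = ∫ t in (0:ℝ)..1, f t) :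
    ∀ δ > (0:ℝ), ∃ τ : ℝ → ℝ,
      ContDiff ℝ (⊤ : ℕ∞) τ ∧ (∀ t, τ (t + 1) = τ t + 1) ∧ (∀ t, 0 < deriv τ t) ∧
      ∀ t, κ - δ ≤ deriv τ t * f (τ t) ∧ deriv τ t * f (τ t) ≤ κ + δ := by
  intro δ hδ
  -- uniform negative bound on f
  obtain ⟨x₀, hx₀mem, hx₀max⟩ :=
    isCompact_Icc.exists_isMaxOn (α := ℝ) (s := Icc (0:ℝ) 1) ⟨0, by norm_num⟩ hf.continuousOn
  set m : ℝ := -f x₀ with hm_def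
  have hm : 0 < m := by simp only [hm_def]; linarith [hfneg x₀]
  have hfle : ∀ t, f t ≤ -m := by
    intro t
    have h1 : f (t - (⌊t⌋ : ℝ) * 1) = f t := hfper.sub_int_mul_eq ⌊t⌋
    have h2 : t - (⌊t⌋ : ℝ) * 1 ∈ Icc (0:ℝ) 1 := by
      constructor
      · simp only [mul_one]; linarith [Int.floor_le t]
      · simp only [mul_one]; linarith [Int.lt_floor_add_one t]
    have h3 : f t ≤ f x₀ := by rw [← h1]; simpa using hx₀max h2
    simp only [hm_def]
    linarith
  -- κ ≤ -m < 0
  have hκneg : κ ≤ -m := by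
    rw [hκ]
    calc (∫ t in (0:ℝ)..1, f t) ≤ ∫ _t in (0:ℝ)..1, (-m) := by
          apply intervalIntegral.integral_mono_on (by norm_num) (hf.intervalIntegrable _ _)
            intervalIntegrable_const
          intro x _; exact hfle x
      _ = -m := by rw [intervalIntegral.integral_const]; simp [hm_def]
  -- choice of ε
  set ε : ℝ := min (min (m/2) 1) (δ * m / (m + 2*(|κ|+1))) with hε_def
  have hden : 0 < m + 2*(|κ|+1) := by positivity
  have hε : 0 < ε := by
    apply lt_min (lt_min (by linarith) one_pos)
    positivity
  have hε1 : ε ≤ m/2 := le_trans (min_le_left _ _) (min_le_left _ _)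
  have hε2 : ε ≤ 1 := le_trans (min_le_left _ _) (min_le_right _ _)
  have hε3 : ε * (m + 2*(|κ|+1)) ≤ δ * m := by
    have := min_le_right (min (m/2) 1) (δ * m / (m + 2*(|κ|+1)))
    calc ε * (m + 2*(|κ|+1)) ≤ (δ * m / (m + 2*(|κ|+1))) * (m + 2*(|κ|+1)) := by
          apply mul_le_mul_of_nonneg_right _ hden.le
          exact this
      _ = δ * m := by field_simp
  -- Fourier approximation
  obtain ⟨d, hd⟩ := aux_fourier_approx f hf hfper ε hε
  set p : ℝ → ℂ := fun t => ∑ n ∈ d.support, d n * Complex.exp (2 * Real.pi * Complex.I * n * t) with hp_def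
  set P : ℝ → ℂ := fun t => ∑ n ∈ d.support,
      if n = 0 then d n * t else d n * Complex.exp (2 * Real.pi * Complex.I * n * t) / (2 * Real.pi * Complex.I * n)
    with hP_def
  have hlin : ∀ (a : ℂ), ContDiff ℝ (⊤ : ℕ∞) (fun t : ℝ => a * (t : ℂ)) := fun a =>
    (ContinuousLinearMap.contDiff (a • Complex.ofRealCLM))
  have hder : ∀ (a : ℂ) (t : ℝ), HasDerivAt (fun t : ℝ => a * (t : ℂ)) a t := by
    intro a t
    simpa using ((Complex.ofRealCLM.hasDerivAt (x := t)).const_mul a)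
  have hPder : ∀ t, HasDerivAt P (p t) t := by
    intro t
    apply HasDerivAt.fun_sum
    intro n _
    by_cases hn : n = 0
    · subst hn
      simp only [if_true]
      have := hder (d 0) t
      simpa using this.congr_deriv (by simp)
    · simp only [if_neg hn]
      have h1 : HasDerivAt (fun t : ℝ => Complex.exp (2 * Real.pi * Complex.I * n * t))
          (Complex.exp (2 * Real.pi * Complex.I * n * t) * (2 * Real.pi * Complex.I * n)) t := by
        simpa using (hder (2 * Real.pi * Complex.I * n) t).cexp
      have := (h1.const_mul (d n)).div_const (2 * Real.pi * Complex.I * n)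
      convert this using 1
      · rfl
      have hne : (2 * (Real.pi:ℂ) * Complex.I * n) ≠ 0 := by
        simp [Real.pi_ne_zero, Complex.I_ne_zero, hn]
      field_simp
  have hPsmooth : ContDiff ℝ (⊤ : ℕ∞) P := by
    apply ContDiff.sum
    intro n _
    by_cases hn : n = 0
    · simp only [if_pos hn]
      exact hlin (d n)
    · simp only [if_neg hn]
      exact ((contDiff_const (c := d n)).mul (Complex.contDiff_exp.comp (hlin _))).div_const _
  have hpper : ∀ t, p (t + 1) = p t := by
    intro t
    refine Finset.sum_congr rfl fun n _ => ?_
    congr 1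
    push_cast
    rw [mul_add, Complex.exp_add, mul_one]
    have : Complex.exp (2 * (Real.pi:ℂ) * Complex.I * n) = 1 := by
      simpa [mul_comm, mul_assoc, mul_left_comm] using Complex.exp_int_mul_two_pi_mul_I n
    rw [this, mul_one]
  have hpcont : Continuous p := continuous_finset_sum _ fun n _ => by fun_prop
  -- real parts
  set g : ℝ → ℝ := fun t => (p t).re with hg_def
  set G : ℝ → ℝ := fun t => (P t).re with hG_def
  have hgapprox : ∀ t, |g t - f t| ≤ ε := by
    intro t
    have := hd t
    have h1 : |(p t - (f t : ℂ)).re| ≤ ‖p t - (f t : ℂ)‖ := Complex.abs_re_le_norm _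
    simp only [Complex.sub_re, Complex.ofReal_re] at h1
    exact le_trans h1 this
  have hgcont : Continuous g := Complex.continuous_re.comp hpcont
  have hgper : ∀ t, g (t + 1) = g t := fun t => by simp only [hg_def, hpper t]
  have hgneg : ∀ t, g t ≤ -m/2 := by
    intro t
    have h1 := hgapprox t
    have h2 := hfle t
    have := abs_le.1 h1
    linarith [this.1, this.2, hε1]
  have hgneg' : ∀ t, g t < 0 := fun t => lt_of_le_of_lt (hgneg t) (by linarith)
  have hGder : ∀ t, HasDerivAt G (g t) t := fun t =>
    (Complex.reCLM.hasFDerivAt.comp_hasDerivAt t (hPder t))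
  have hGsmooth : ContDiff ℝ (⊤ : ℕ∞) G := Complex.reCLM.contDiff.comp hPsmooth
  -- c = ∫₀¹ g
  set c : ℝ := G 1 - G 0 with hc_def
  have hcint : c = ∫ t in (0:ℝ)..1, g t := by
    rw [hc_def]
    rw [intervalIntegral.integral_eq_sub_of_hasDerivAt (fun x _ => hGder x)
      (hgcont.intervalIntegrable _ _)]
  have hcκ : |c - κ| ≤ ε := by
    rw [hcint, hκ, ← intervalIntegral.integral_sub (hgcont.intervalIntegrable _ _)
      (hf.intervalIntegrable _ _)]
    have := intervalIntegral.norm_integral_le_of_norm_le_const (a := (0:ℝ)) (b := 1) (C := ε)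
      (f := fun t => g t - f t) (fun x _ => by simpa using hgapprox x)
    simpa using this
  have hcneg : c < 0 := by
    have h1 := abs_le.1 hcκ
    have : c ≤ κ + ε := by linarith [h1.2]
    linarith [hκneg, hε1, hm]
  have hcabs : |c| ≤ |κ| + 1 := by
    have h1 := abs_le.1 hcκ
    have h2 := abs_le.1 (le_refl |κ|)
    rw [abs_le]
    constructor
    · linarith [neg_abs_le κ, hε2, h1.1]
    · linarith [le_abs_self κ, hε2, h1.2]
  -- σ
  set σ : ℝ → ℝ := fun s => (G s - G 0) / c with hσ_def
  have hσder : ∀ s, HasDerivAt σ (g s / c) s := fun s =>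
    ((hGder s).sub_const (G 0)).div_const c
  have hσsmooth : ContDiff ℝ (⊤ : ℕ∞) σ := (hGsmooth.sub contDiff_const).div_const c
  have hσcont : Continuous σ := hσsmooth.continuous
  have hσderpos : ∀ s, 0 < g s / c := fun s => div_pos_of_neg_of_neg (hgneg' s) hcneg
  have hσmono : StrictMono σ := by
    apply strictMono_of_deriv_pos
    intro s
    rw [(hσder s).deriv]
    exact hσderpos s
  have hσper : ∀ s, σ (s + 1) = σ s + 1 := by
    have hconst : ∀ s t : ℝ, G (s + 1) - G s = G (t + 1) - G t := by
      intro s t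
      apply is_const_of_deriv_eq_zero (f := fun s => G (s + 1) - G s)
      · intro x
        exact (((hGder (x+1)).comp x (((hasDerivAt_id x).add_const 1))).sub (hGder x)).differentiableAt
      · intro x
        have h1 : HasDerivAt (fun s => G (s + 1) - G s) (g (x+1) * 1 - g x) x :=
          ((hGder (x+1)).comp (h := fun y => id y + 1) x ((hasDerivAt_id x).add_const 1)).fun_sub (hGder x)
        rw [h1.deriv]
        have : g (x + 1) = g x := by
          have := hgper x; linarith
        rw [this]; ring
    intro s
    have h1 := hconst s 0
    simp only [zero_add] at h1
    simp only [hσ_def]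
    have : G (s+1) - G 0 = (G s - G 0) + c := by
      rw [hc_def]; linarith
    rw [this, add_div, div_self (ne_of_lt hcneg)]
  have hσper' : ∀ s, σ (s - 1) = σ s - 1 := by
    intro s
    have := hσper (s - 1)
    simp only [sub_add_cancel] at this
    linarith
  have hσnat : ∀ (k : ℕ) (s : ℝ), σ (s + k) = σ s + k := by
    intro k
    induction k with
    | zero => simp
    | succ n ih =>
      intro s
      push_cast
      rw [← add_assoc, hσper (s + n), ih s]
      ring
  have hσnat' : ∀ (k : ℕ) (s : ℝ), σ (s - k) = σ s - k := by
    intro k s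
    have := hσnat k (s - k)
    simp only [sub_add_cancel] at this
    linarith
  have hσsurj : Function.Surjective σ := by
    intro y
    obtain ⟨N, hN⟩ := exists_nat_ge (|y - σ 0| + 1)
    have hy1 : σ (-(N:ℝ)) ≤ y := by
      have h1 : σ (-(N:ℝ)) = σ 0 - N := by
        have := hσnat' N 0; simpa using this
      rw [h1]
      have h2 := neg_abs_le (y - σ 0)
      linarith
    have hy2 : y ≤ σ (N:ℝ) := by
      have h1 : σ (N:ℝ) = σ 0 + N := by
        have := hσnat N 0; simpa using this
      rw [h1]
      have h2 := le_abs_self (y - σ 0)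
      linarith
    have hmem : y ∈ Icc (σ (-(N:ℝ))) (σ (N:ℝ)) := ⟨hy1, hy2⟩
    have hsub := intermediate_value_Icc ((neg_nonpos.mpr (Nat.cast_nonneg N)).trans (Nat.cast_nonneg N)) hσcont.continuousOn
    obtain ⟨x, _, hx⟩ := hsub hmem
    exact ⟨x, hx⟩
  -- homeomorphism
  set iso : ℝ ≃o ℝ := StrictMono.orderIsoOfSurjective σ hσmono hσsurj with hiso_def
  set homeo : ℝ ≃ₜ ℝ := iso.toHomeomorph with hhomeo_def
  have hcoe : (homeo : ℝ → ℝ) = σ := rfl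
  set τ : ℝ → ℝ := ⇑homeo.symm with hτ_def
  have hστ : ∀ y, σ (τ y) = y := fun y => homeo.apply_symm_apply y
  have hτσ : ∀ s, τ (σ s) = s := fun s => homeo.symm_apply_apply s
  have hτsmooth : ContDiff ℝ (⊤ : ℕ∞) τ := by
    apply homeo.contDiff_symm_deriv (f' := fun s => g s / c)
      (fun x => (ne_of_gt (hσderpos x))) (fun x => hσder x)
    rw [hcoe]
    exact hσsmooth
  have hτder : ∀ t, HasDerivAt τ ((g (τ t) / c)⁻¹) t := by
    intro t
    apply HasDerivAt.of_local_left_inverse (homeo.symm.continuous.continuousAt)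
      (hσder (τ t)) (ne_of_gt (hσderpos (τ t)))
    filter_upwards with y
    exact hστ y
  have hτderval : ∀ t, deriv τ t = c / g (τ t) := by
    intro t
    rw [(hτder t).deriv, inv_div]
  have hτper : ∀ t, τ (t + 1) = τ t + 1 := by
    intro t
    apply hσmono.injective
    rw [hστ, hσper, hστ]
  have hτderpos : ∀ t, 0 < deriv τ t := by
    intro t
    rw [hτderval]
    exact div_pos_of_neg_of_neg hcneg (hgneg' _)
  refine ⟨τ, hτsmooth, hτper, hτderpos, fun t => ?_⟩
  -- final estimate
  set s := τ t with hs_def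
  rw [hτderval]
  set a : ℝ := g s with ha_def
  have ha2 : a ≤ -m/2 := hgneg s
  have ha3 : a < 0 := hgneg' s
  have hfa : |f s - a| ≤ ε := by
    have := hgapprox s
    rw [abs_sub_comm]
    exact this
  have hane : a ≠ 0 := ne_of_lt ha3
  have hkey : |c / a * f s - κ| ≤ δ := by
    have hstep1 : c / a * f s - κ = c * (f s - a) / a + (c - κ) := by
      field_simp
      ring
    have habs_a : m/2 ≤ |a| := by
      rw [abs_of_neg ha3]; linarith
    have hterm : |c * (f s - a) / a| ≤ (|κ| + 1) * ε / (m/2) := by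
      rw [abs_div, abs_mul]
      apply div_le_div₀ (by positivity) _ (by linarith) habs_a
      apply mul_le_mul hcabs hfa (abs_nonneg _) (by positivity)
    have hfinal : (|κ| + 1) * ε / (m/2) + ε ≤ δ := by
      have h2 : (|κ| + 1) * ε / (m/2) ≤ δ - ε := by
        rw [div_le_iff₀ (by linarith : (0:ℝ) < m/2)]
        nlinarith [hε3]
      linarith
    calc |c / a * f s - κ| = |c * (f s - a) / a + (c - κ)| := by rw [hstep1]
      _ ≤ |c * (f s - a) / a| + |c - κ| := abs_add_le _ _
      _ ≤ (|κ| + 1) * ε / (m/2) + ε := add_le_add hterm hcκ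
      _ ≤ δ := hfinal
  have := abs_le.1 hkey
  constructor
  · linarith [this.1]
  · linarith [this.2]
end

section
/- On ℝ^{2n} = ℝ^n × ℝ^n with the conventions below, let J be a smooth ω-tame almost complex structure and let u : [0,1] × ℝ → ℝ^{2n} be a smooth map with bounded image satisfying ∂_s u + J(u) ∂_t u = 0, together with the boundary conditions u(0, t) ∈ {0} × ℝ^n and u(1, t) ∈ ℝ^n × {0} for all t ∈ ℝ. Then u is constant. -/
open MeasureTheory Set
open scoped RealInnerProductSpace

/-- The standard symplectic form on `ℝ²ⁿ = ℝⁿ × ℝⁿ`. -/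
noncomputable def stdOmega {n : ℕ}
    (v w : EuclideanSpace ℝ (Fin n) × EuclideanSpace ℝ (Fin n)) : ℝ :=
  ⟪v.2, w.1⟫ - ⟪v.1, w.2⟫

namespace Stmt9Aux

/-- Blow-up lemma: an antitone function satisfying a quadratic decay inequality
is nonnegative everywhere. -/
lemma blowup {A : ℝ → ℝ} {k : ℝ} (hk : 0 < k) (hA : Antitone A)
    (key : ∀ t₁ t₂ b : ℝ, t₁ ≤ t₂ → 0 ≤ b → (∀ t ∈ Icc t₁ t₂, b ≤ |A t|) →
      k * b ^ 2 * (t₂ - t₁) ≤ A t₁ - A t₂) :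
    ∀ t, 0 ≤ A t := by
  by_contra hcon
  push_neg at hcon
  obtain ⟨t₀, ht₀⟩ := hcon
  set δ : ℝ := -A t₀ with hδdef
  have hδ : 0 < δ := by simp only [hδdef]; linarith
  have claim : ∀ m : ℕ, A (t₀ + 2 / (k * δ) * (1 - (1/2) ^ m)) ≤ -(2 ^ m * δ) := by
    intro m
    induction m with
    | zero => simp [hδdef]
    | succ m ih =>
      set b : ℝ := 2 ^ m * δ with hb
      have hbpos : 0 < b := by positivity
      set tm : ℝ := t₀ + 2 / (k * δ) * (1 - (1/2) ^ m) with htm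
      have hΔpos : 0 < 1 / (k * b) := by positivity
      have hbound : ∀ t ∈ Icc tm (tm + 1/(k*b)), b ≤ |A t| := by
        intro t ht
        have h1 : A t ≤ A tm := hA ht.1
        have h2 : A t ≤ -b := le_trans h1 ih
        have : b ≤ -A t := by linarith
        exact this.trans (neg_le_abs _)
      have hstep := key tm (tm + 1/(k*b)) b (by linarith) hbpos.le hbound
      have heval : k * b ^ 2 * (tm + 1/(k*b) - tm) = b := by
        field_simp
        ring
      rw [heval] at hstep
      have hnext : A (tm + 1/(k*b)) ≤ -(2 ^ (m+1) * δ) := by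
        calc A (tm + 1/(k*b)) ≤ -b - b := by linarith
          _ = -(2 ^ (m+1) * δ) := by rw [hb]; ring
      have harg : tm + 1/(k*b) = t₀ + 2 / (k * δ) * (1 - (1/2) ^ (m+1)) := by
        rw [htm, hb]
        have hkδ : k * δ ≠ 0 := by positivity
        field_simp
        have h2m : (1/2:ℝ)^m * 2^m = 1 := by rw [← mul_pow]; norm_num
        linear_combination (-1:ℝ) * h2m
      rwa [harg] at hnext
  set T : ℝ := t₀ + 2 / (k * δ) with hT
  have hle : ∀ m : ℕ, A T ≤ -(2 ^ m * δ) := by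
    intro m
    refine le_trans (hA ?_) (claim m)
    have h1 : (0:ℝ) ≤ (1/2:ℝ) ^ m := by positivity
    have h2 : (0:ℝ) ≤ 2 / (k * δ) := by positivity
    nlinarith
  obtain ⟨m, hm⟩ := pow_unbounded_of_one_lt (-A T / δ) (one_lt_two (α := ℝ))
  have h2 : -A T < 2 ^ m * δ := by
    rw [div_lt_iff₀ hδ] at hm
    linarith
  have := hle m
  linarith

/-- Cauchy–Schwarz on `[0,1]`. -/
lemma sq_integral_le {h : ℝ → ℝ} (hc : ContinuousOn h (Icc 0 1)) :
    (∫ s in Icc (0:ℝ) 1, h s) ^ 2 ≤ ∫ s in Icc (0:ℝ) 1, (h s) ^ 2 := by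
  have hi : IntegrableOn h (Icc (0:ℝ) 1) := hc.integrableOn_compact isCompact_Icc
  have hi2 : IntegrableOn (fun s => (h s) ^ 2) (Icc (0:ℝ) 1) :=
    (hc.pow 2).integrableOn_compact isCompact_Icc
  set c : ℝ := ∫ s in Icc (0:ℝ) 1, h s with hc'
  have h0 : (0:ℝ) ≤ ∫ s in Icc (0:ℝ) 1, (h s - c) ^ 2 :=
    setIntegral_nonneg measurableSet_Icc fun _ _ => sq_nonneg _
  have hvol : (volume (Icc (0:ℝ) 1)).toReal = 1 := by
    simp [Real.volume_Icc]
  have hexp : (∫ s in Icc (0:ℝ) 1, (h s - c) ^ 2)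
      = (∫ s in Icc (0:ℝ) 1, (h s) ^ 2) - c ^ 2 := by
    have : (fun s => (h s - c) ^ 2) = fun s => (h s) ^ 2 - (2*c) * h s + c ^ 2 := by
      funext s; ring
    rw [this, integral_add, integral_sub hi2 (hi.const_mul _)]
    · rw [MeasureTheory.integral_const_mul, setIntegral_const, measureReal_def, hvol, ← hc']
      simp only [smul_eq_mul, one_mul]
      ring
    · exact hi2.sub (hi.const_mul _)
    · exact integrableOn_const (by simp [Real.volume_Icc])
  linarith

lemma swap_integrals {F : ℝ × ℝ → ℝ} {s t : Set ℝ}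
    (hF : IntegrableOn F (s ×ˢ t)) :
    ((∫ z in s ×ˢ t, F z) = ∫ y in t, ∫ x in s, F (x, y)) ∧
      IntegrableOn (fun y => ∫ x in s, F (x, y)) t := by
  have hF' : Integrable F (((volume : Measure ℝ).restrict s).prod
      ((volume : Measure ℝ).restrict t)) := by
    rw [Measure.prod_restrict, ← Measure.volume_eq_prod]; exact hF
  have hswap : Integrable (F ∘ Prod.swap) (((volume : Measure ℝ).restrict t).prod
      ((volume : Measure ℝ).restrict s)) := hF'.swap
  constructor
  · have h1 : ∫ z in s ×ˢ t, F z
        = ∫ z, F z ∂(((volume : Measure ℝ).restrict s).prod ((volume : Measure ℝ).restrict t)) := by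
      rw [Measure.prod_restrict, ← Measure.volume_eq_prod]
    rw [h1, ← integral_prod_swap F]
    exact integral_prod (fun z => F z.swap) hswap
  · exact hswap.integral_prod_left

lemma mem_pair_of_Icc_not_Ioo {a b x : ℝ} (h1 : x ∈ Icc a b) (h2 : x ∉ Ioo a b) :
    x = a ∨ x = b := by
  rcases eq_or_lt_of_le h1.1 with h | h
  · exact Or.inl h.symm
  rcases eq_or_lt_of_le h1.2 with h' | h'
  · exact Or.inr h'
  exact absurd ⟨h, h'⟩ h2

lemma rect_boundary_null (a b : ℝ × ℝ) :
    volume ((Icc a b : Set (ℝ × ℝ)) \ (Ioo a.1 b.1 ×ˢ Ioo a.2 b.2)) = 0 := by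
  have hsub : (Icc a b : Set (ℝ × ℝ)) \ (Ioo a.1 b.1 ×ˢ Ioo a.2 b.2) ⊆
      (({a.1, b.1} : Set ℝ) ×ˢ (univ : Set ℝ)) ∪
        ((univ : Set ℝ) ×ˢ ({a.2, b.2} : Set ℝ)) := by
    rintro ⟨x₁, x₂⟩ ⟨hmem, hnot⟩
    rw [Icc_prod_eq] at hmem
    obtain ⟨h1, h2⟩ := hmem
    by_cases hx1 : x₁ ∈ Ioo a.1 b.1
    · have hx2 : x₂ ∉ Ioo a.2 b.2 := fun h => hnot ⟨hx1, h⟩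
      have h' : x₂ = a.2 ∨ x₂ = b.2 := mem_pair_of_Icc_not_Ioo h2 hx2
      exact Or.inr ⟨mem_univ _, by rcases h' with h | h <;> simp [h]⟩
    · have h' : x₁ = a.1 ∨ x₁ = b.1 := mem_pair_of_Icc_not_Ioo h1 hx1
      exact Or.inl ⟨by rcases h' with h | h <;> simp [h], mem_univ _⟩
  refine measure_mono_null hsub (measure_union_null ?_ ?_) <;>
    rw [Measure.volume_eq_prod, Measure.prod_prod]
  · rw [Set.Countable.measure_zero (by simp : ({a.1, b.1} : Set ℝ).Countable) volume]
    simp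
  · rw [Set.Countable.measure_zero (by simp : ({a.2, b.2} : Set ℝ).Countable) volume]
    simp

variable {F : Type*} [NormedAddCommGroup F] [InnerProductSpace ℝ F]

lemma hasfd_inner (u : ℝ × ℝ → F × F) {U : Set (ℝ × ℝ)} (hU : IsOpen U)
    (huU : ContDiffOn ℝ (⊤ : ℕ∞) u U) {x : ℝ × ℝ} (hx : x ∈ U) (w h : ℝ × ℝ) :
    ∃ Φ : (ℝ × ℝ) →L[ℝ] ℝ, HasFDerivAt (fun z => ⟪(u z).2, (fderiv ℝ u z w).1⟫) Φ x ∧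
      Φ h = ⟪(u x).2, ((fderiv ℝ (fderiv ℝ u) x h) w).1⟫ +
            ⟪(fderiv ℝ u x h).2, (fderiv ℝ u x w).1⟫ := by
  have hdiffU : DifferentiableOn ℝ u U := huU.differentiableOn (by simp)
  have hud : HasFDerivAt u (fderiv ℝ u x) x :=
    ((hdiffU x hx).differentiableAt (hU.mem_nhds hx)).hasFDerivAt
  have hD1 : ContDiffOn ℝ (⊤ : ℕ∞) (fderiv ℝ u) U := huU.fderiv_of_isOpen hU (by simp)
  have hD2 : HasFDerivAt (fderiv ℝ u) (fderiv ℝ (fderiv ℝ u) x) x :=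
    (((hD1.differentiableOn (by simp)) x hx).differentiableAt (hU.mem_nhds hx)).hasFDerivAt
  have hP : HasFDerivAt (fun z => (u z).2)
      ((ContinuousLinearMap.snd ℝ F F).comp (fderiv ℝ u x)) x := hud.snd
  have hQ0 : HasFDerivAt (fun z => fderiv ℝ u z w)
      ((fderiv ℝ (fderiv ℝ u) x).flip w) x := by
    have h' := hD2.clm_apply (hasFDerivAt_const w x)
    simpa using h'
  have hQ : HasFDerivAt (fun z => (fderiv ℝ u z w).1)
      ((ContinuousLinearMap.fst ℝ F F).comp ((fderiv ℝ (fderiv ℝ u) x).flip w)) x := hQ0.fst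
  refine ⟨_, hP.inner ℝ hQ, ?_⟩
  simp [fderivInnerCLM_apply, ContinuousLinearMap.comp_apply,
    ContinuousLinearMap.prod_apply, ContinuousLinearMap.flip_apply]

lemma interior_calc (u : ℝ × ℝ → F × F) (S : Set (ℝ × ℝ)) (hu : ContDiffOn ℝ (⊤ : ℕ∞) u S)
    {x : ℝ × ℝ} (hx : x ∈ interior S) :
    DifferentiableAt ℝ (fun z => ⟪(u z).2, ((fderivWithin ℝ u S z) (0,1)).1⟫) x ∧
    DifferentiableAt ℝ (fun z => -⟪(u z).2, ((fderivWithin ℝ u S z) (1,0)).1⟫) x ∧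
    fderiv ℝ (fun z => ⟪(u z).2, ((fderivWithin ℝ u S z) (0,1)).1⟫) x (1,0) +
      fderiv ℝ (fun z => -⟪(u z).2, ((fderivWithin ℝ u S z) (1,0)).1⟫) x (0,1) =
      ⟪(fderivWithin ℝ u S x (1,0)).2, (fderivWithin ℝ u S x (0,1)).1⟫ -
        ⟪(fderivWithin ℝ u S x (1,0)).1, (fderivWithin ℝ u S x (0,1)).2⟫ := by
  have hU : IsOpen (interior S) := isOpen_interior
  have huU : ContDiffOn ℝ (⊤ : ℕ∞) u (interior S) := hu.mono interior_subset
  have hveq : ∀ y ∈ interior S, fderivWithin ℝ u S y = fderiv ℝ u y := fun y hy =>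
    fderivWithin_of_mem_nhds (mem_interior_iff_mem_nhds.1 hy)
  have hev : ∀ ww : ℝ × ℝ, (fun z => ⟪(u z).2, ((fderivWithin ℝ u S z) ww).1⟫) =ᶠ[nhds x]
      (fun z => ⟪(u z).2, ((fderiv ℝ u z) ww).1⟫) := by
    intro ww
    filter_upwards [hU.mem_nhds hx] with y hy
    rw [hveq y hy]
  obtain ⟨Φ₁, hΦ₁, hval₁⟩ := hasfd_inner u hU huU hx (0,1) (1,0)
  obtain ⟨Φ₂, hΦ₂, hval₂⟩ := hasfd_inner u hU huU hx (1,0) (0,1)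
  have hf1 : HasFDerivAt (fun z => ⟪(u z).2, ((fderivWithin ℝ u S z) (0,1)).1⟫) Φ₁ x :=
    hΦ₁.congr_of_eventuallyEq (hev (0,1))
  have hf2 : HasFDerivAt (fun z => ⟪(u z).2, ((fderivWithin ℝ u S z) (1,0)).1⟫) Φ₂ x :=
    hΦ₂.congr_of_eventuallyEq (hev (1,0))
  have hg2 : HasFDerivAt (fun z => -⟪(u z).2, ((fderivWithin ℝ u S z) (1,0)).1⟫) (-Φ₂) x :=
    hf2.neg
  refine ⟨hf1.differentiableAt, hg2.differentiableAt, ?_⟩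
  rw [hf1.fderiv, hg2.fderiv]
  have hud : ∀ y ∈ interior S, HasFDerivAt u (fderiv ℝ u y) y := fun y hy =>
    (((huU.differentiableOn (by simp)) y hy).differentiableAt (hU.mem_nhds hy)).hasFDerivAt
  have hD1 : ContDiffOn ℝ (⊤ : ℕ∞) (fderiv ℝ u) (interior S) := huU.fderiv_of_isOpen hU (by simp)
  have hD2 : HasFDerivAt (fderiv ℝ u) (fderiv ℝ (fderiv ℝ u) x) x :=
    (((hD1.differentiableOn (by simp)) x hx).differentiableAt (hU.mem_nhds hx)).hasFDerivAt
  have hsymm := second_derivative_symmetric_of_eventually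
      (Filter.eventually_of_mem (hU.mem_nhds hx) hud) hD2
      (((1:ℝ), (0:ℝ))) (((0:ℝ), (1:ℝ)))
  rw [ContinuousLinearMap.neg_apply, hval₁, hval₂, hveq x hx, hsymm,
    real_inner_comm ((fderiv ℝ u x (0,1)).2) ((fderiv ℝ u x (1,0)).1)]
  ring

end Stmt9Aux

set_option maxHeartbeats 2000000 in
/-- A bounded `J`-holomorphic strip `[0,1] × ℝ → ℝ²ⁿ` with `ω`-tame `J`, with
boundary on the two exact Lagrangians `{0} × ℝⁿ` (a cotangent fiber) and
`ℝⁿ × {0}` (the zero section), is constant. -/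
theorem stmt_9 (n : ℕ)
    (J : (EuclideanSpace ℝ (Fin n) × EuclideanSpace ℝ (Fin n)) →
      ((EuclideanSpace ℝ (Fin n) × EuclideanSpace ℝ (Fin n)) →L[ℝ]
        (EuclideanSpace ℝ (Fin n) × EuclideanSpace ℝ (Fin n))))
    (hJsmooth : ContDiff ℝ (⊤ : ℕ∞) J)
    (hJsq : ∀ z v, J z (J z v) = -v)
    (hJtame : ∀ z v, v ≠ 0 → 0 < stdOmega v (J z v))
    (u : ℝ × ℝ → EuclideanSpace ℝ (Fin n) × EuclideanSpace ℝ (Fin n))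
    (hu : ContDiffOn ℝ (⊤ : ℕ∞) u (Icc 0 1 ×ˢ univ))
    (hbdd : Bornology.IsBounded (u '' (Icc 0 1 ×ˢ univ)))
    (hhol : ∀ z ∈ (Icc (0:ℝ) 1 ×ˢ (univ : Set ℝ)),
      fderivWithin ℝ u (Icc 0 1 ×ˢ univ) z (1, 0) +
        J (u z) (fderivWithin ℝ u (Icc 0 1 ×ˢ univ) z (0, 1)) = 0)
    (hbc0 : ∀ t : ℝ, (u (0, t)).1 = 0)
    (hbc1 : ∀ t : ℝ, (u (1, t)).2 = 0) :
    ∀ z ∈ (Icc (0:ℝ) 1 ×ˢ (univ : Set ℝ)),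
      ∀ w ∈ (Icc (0:ℝ) 1 ×ˢ (univ : Set ℝ)), u z = u w := by
  classical
  intro z hz w hw
  rcases Nat.eq_zero_or_pos n with hn | hn
  · subst hn
    have hss : ∀ a b : EuclideanSpace ℝ (Fin 0), a = b := fun a b =>
      by ext i; exact i.elim0
    exact Prod.ext (hss _ _) (hss _ _)
  set S : Set (ℝ × ℝ) := Icc 0 1 ×ˢ univ with hSdef
  have hSint : interior S = Ioo 0 1 ×ˢ (univ : Set ℝ) := by
    rw [hSdef, interior_prod_eq, interior_Icc, interior_univ]
  have hSconv : Convex ℝ S := (convex_Icc _ _).prod convex_univ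
  have hSne : (interior S).Nonempty := by
    rw [hSint]
    exact ⟨(1/2, 0), ⟨by norm_num, by norm_num⟩, mem_univ _⟩
  have hSuniq : UniqueDiffOn ℝ S := uniqueDiffOn_convex hSconv hSne
  have hucont : ContinuousOn u S := hu.continuousOn
  have hvcont : ContinuousOn (fderivWithin ℝ u S) S := hu.continuousOn_fderivWithin hSuniq (by simp)
  have hdiff : DifferentiableOn ℝ u S := hu.differentiableOn (by simp)
  -- the Cauchy-Riemann relation in the form `∂ₜu = J(u) ∂ₛu`
  have hw2 : ∀ p ∈ S, fderivWithin ℝ u S p (0,1) = J (u p) (fderivWithin ℝ u S p (1,0)) := by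
    intro p hp
    have h := hhol p hp
    have h4 : J (u p) (fderivWithin ℝ u S p (1,0)) +
        J (u p) (J (u p) (fderivWithin ℝ u S p (0,1))) = 0 := by
      rw [← map_add, h, map_zero]
    rw [hJsq] at h4
    exact ((add_neg_eq_zero).1 h4).symm
  -- a bound for `u`
  obtain ⟨M₀, hM₀⟩ := isBounded_iff_forall_norm_le.1 hbdd
  set M : ℝ := max M₀ 1 with hMdef
  have hM1 : (1:ℝ) ≤ M := le_max_right _ _
  have hMpos : (0:ℝ) < M := lt_of_lt_of_le one_pos hM1
  have hM : ∀ p ∈ S, ‖(u p).2‖ ≤ M := fun p hp =>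
    le_trans (norm_snd_le (u p)) (le_trans (hM₀ _ (mem_image_of_mem u hp)) (le_max_left _ _))
  -- the uniform taming constant
  set K : Set (EuclideanSpace ℝ (Fin n) × EuclideanSpace ℝ (Fin n)) := closure (u '' S)
    with hKdef
  have hKcomp : IsCompact K := hbdd.isCompact_closure
  have hKne : K.Nonempty := ⟨u z, subset_closure (mem_image_of_mem u hz)⟩
  have hsphcomp : IsCompact (Metric.sphere
      (0 : EuclideanSpace ℝ (Fin n) × EuclideanSpace ℝ (Fin n)) 1) := isCompact_sphere _ _
  have hsphne : (Metric.sphere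
      (0 : EuclideanSpace ℝ (Fin n) × EuclideanSpace ℝ (Fin n)) 1).Nonempty := by
    refine ⟨(EuclideanSpace.single ⟨0, hn⟩ (1:ℝ), 0), ?_⟩
    rw [mem_sphere_zero_iff_norm, Prod.norm_def]
    simp [EuclideanSpace.norm_single]
  set φ : (EuclideanSpace ℝ (Fin n) × EuclideanSpace ℝ (Fin n)) ×
      (EuclideanSpace ℝ (Fin n) × EuclideanSpace ℝ (Fin n)) → ℝ :=
    fun zw => stdOmega zw.2 (J zw.1 zw.2) with hφdef
  have hφcont : Continuous φ := by
    have hJc : Continuous fun zw : (EuclideanSpace ℝ (Fin n) × EuclideanSpace ℝ (Fin n)) ×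
        (EuclideanSpace ℝ (Fin n) × EuclideanSpace ℝ (Fin n)) => J zw.1 zw.2 :=
      (hJsmooth.continuous.comp continuous_fst).clm_apply continuous_snd
    simp only [hφdef, stdOmega]
    exact ((continuous_snd.snd).inner hJc.fst).sub ((continuous_snd.fst).inner hJc.snd)
  obtain ⟨mn, hmnmem, hmnmin⟩ :=
    (hKcomp.prod hsphcomp).exists_isMinOn (hKne.prod hsphne) hφcont.continuousOn
  set c : ℝ := φ mn with hcdef
  have hw₀ne : mn.2 ≠ 0 := by
    have h1 : ‖mn.2‖ = 1 := mem_sphere_zero_iff_norm.1 hmnmem.2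
    intro h; rw [h, norm_zero] at h1; exact zero_ne_one h1
  have hcpos : 0 < c := hJtame mn.1 mn.2 hw₀ne
  have hcle : ∀ p ∈ K, ∀ w' : EuclideanSpace ℝ (Fin n) × EuclideanSpace ℝ (Fin n),
      c * ‖w'‖^2 ≤ stdOmega w' (J p w') := by
    intro p hp w'
    rcases eq_or_ne w' 0 with rfl | hne
    · simp [stdOmega]
    · have hnormne : ‖w'‖ ≠ 0 := norm_ne_zero_iff.2 hne
      have hmem2 : (p, ‖w'‖⁻¹ • w') ∈ K ×ˢ Metric.sphere
          (0 : EuclideanSpace ℝ (Fin n) × EuclideanSpace ℝ (Fin n)) 1 := by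
        refine ⟨hp, ?_⟩
        rw [mem_sphere_zero_iff_norm, norm_smul, norm_inv, norm_norm]
        field_simp
      have hscale : φ (p, ‖w'‖⁻¹ • w') = ‖w'‖⁻¹ ^ 2 * stdOmega w' (J p w') := by
        simp only [hφdef, stdOmega, ContinuousLinearMap.map_smul, Prod.smul_fst, Prod.smul_snd,
          real_inner_smul_left, real_inner_smul_right, smul_eq_mul]
        ring
      have hmin2 := isMinOn_iff.1 hmnmin _ hmem2
      rw [hscale, ← hcdef] at hmin2
      have hn2 : (0:ℝ) < ‖w'‖^2 := by positivity
      calc c * ‖w'‖^2 ≤ (‖w'‖⁻¹ ^ 2 * stdOmega w' (J p w')) * ‖w'‖^2 :=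
            mul_le_mul_of_nonneg_right hmin2 hn2.le
        _ = stdOmega w' (J p w') := by field_simp
  -- the energy density
  set dens : ℝ × ℝ → ℝ := fun p =>
    stdOmega (fderivWithin ℝ u S p (1,0)) (fderivWithin ℝ u S p (0,1)) with hdensdef
  have hdens_lb : ∀ p ∈ S, c * ‖fderivWithin ℝ u S p (1,0)‖^2 ≤ dens p := by
    intro p hp
    have h1 : dens p = stdOmega (fderivWithin ℝ u S p (1,0))
        (J (u p) (fderivWithin ℝ u S p (1,0))) := by
      simp only [hdensdef]; rw [hw2 p hp]
    rw [h1]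
    exact hcle (u p) (subset_closure (mem_image_of_mem u hp)) _
  have hdens_nonneg : ∀ p ∈ S, 0 ≤ dens p := fun p hp =>
    le_trans (mul_nonneg hcpos.le (by positivity)) (hdens_lb p hp)
  have happly : ∀ ww : ℝ × ℝ, ContinuousOn (fun p => fderivWithin ℝ u S p ww) S :=
    fun ww => hvcont.clm_apply continuousOn_const
  have hdens_cont : ContinuousOn dens S := by
    simp only [hdensdef, stdOmega]
    exact (((happly (1,0)).snd).inner ((happly (0,1)).fst)).sub
      (((happly (1,0)).fst).inner ((happly (0,1)).snd))
  -- the action functional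
  set A : ℝ → ℝ := fun t =>
    ∫ s in Icc (0:ℝ) 1, ⟪(u (s,t)).2, (fderivWithin ℝ u S (s,t) (1,0)).1⟫ with hAdef
  have hslice : ∀ t : ℝ, MapsTo (fun s : ℝ => (s, t)) (Icc 0 1) S := fun t s hs =>
    ⟨hs, mem_univ _⟩
  have hslicecont : ∀ t : ℝ, Continuous (fun s : ℝ => (s, t)) := fun t =>
    continuous_id.prodMk continuous_const
  -- the boundary conditions kill the boundary terms
  have hbt0 : ∀ t : ℝ, (fderivWithin ℝ u S (0, t) (0,1)).1 = 0 := by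
    intro t
    have hmemS : ∀ τ : ℝ, ((0:ℝ), τ) ∈ S := fun τ => ⟨left_mem_Icc.2 zero_le_one, mem_univ _⟩
    have hγ : HasDerivAt (fun τ : ℝ => ((0:ℝ), τ)) ((0:ℝ), (1:ℝ)) t :=
      (hasDerivAt_const t (0:ℝ)).prodMk (hasDerivAt_id t)
    have h1 : HasFDerivWithinAt u (fderivWithin ℝ u S (0,t)) S (0,t) :=
      (hdiff _ (hmemS t)).hasFDerivWithinAt
    have hcomp : HasDerivWithinAt (fun τ : ℝ => u (0, τ))
        (fderivWithin ℝ u S (0,t) ((0:ℝ),(1:ℝ))) univ t :=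
      h1.comp_hasDerivWithinAt t (hγ.hasDerivWithinAt) (fun τ _ => hmemS τ)
    have hcomp' : HasDerivAt (fun τ : ℝ => u (0, τ)) (fderivWithin ℝ u S (0,t) (0,1)) t := by
      rw [← hasDerivWithinAt_univ]; exact hcomp
    have hfst : HasDerivAt (fun τ : ℝ => (u (0, τ)).1)
        ((fderivWithin ℝ u S (0,t) (0,1)).1) t := by
      have h2 := (ContinuousLinearMap.fst ℝ (EuclideanSpace ℝ (Fin n))
        (EuclideanSpace ℝ (Fin n))).hasFDerivAt.comp_hasDerivAt t hcomp'
      exact h2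
    have hconst : HasDerivAt (fun τ : ℝ => (u ((0:ℝ), τ)).1) 0 t := by
      have heq : (fun τ : ℝ => (u ((0:ℝ), τ)).1) = fun _ => (0 : EuclideanSpace ℝ (Fin n)) :=
        funext fun τ => hbc0 τ
      rw [heq]; exact hasDerivAt_const _ _
    exact hfst.unique hconst
  -- continuity of the integrands
  have hf01cont : ContinuousOn (fun p => ⟪(u p).2, (fderivWithin ℝ u S p (0,1)).1⟫) S :=
    (hucont.snd).inner ((happly (0,1)).fst)
  have hf10cont : ContinuousOn (fun p => ⟪(u p).2, (fderivWithin ℝ u S p (1,0)).1⟫) S :=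
    (hucont.snd).inner ((happly (1,0)).fst)
  have hIccsub : ∀ t₁ t₂ : ℝ, Icc ((0:ℝ),t₁) ((1:ℝ),t₂) ⊆ S := by
    intro t₁ t₂ p hp
    rw [Icc_prod_eq] at hp
    rw [hSdef]
    exact ⟨hp.1, mem_univ _⟩
  -- Green's theorem: the energy over `[0,1] × [t₁,t₂]` equals `A t₁ - A t₂`
  have hGreen : ∀ t₁ t₂ : ℝ, t₁ ≤ t₂ →
      (∫ p in Icc ((0:ℝ), t₁) ((1:ℝ), t₂), dens p) = A t₁ - A t₂ := by
    intro t₁ t₂ h12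
    have hab : ((0:ℝ), t₁) ≤ ((1:ℝ), t₂) := ⟨zero_le_one, h12⟩
    have hIoosub : (Ioo (0:ℝ) 1 ×ˢ Ioo t₁ t₂ : Set (ℝ × ℝ)) ⊆ interior S := by
      rw [hSint]; exact prod_mono Subset.rfl (subset_univ _)
    have hcalc := fun (x : ℝ × ℝ) (hx : x ∈ (Ioo (0:ℝ) 1 ×ˢ Ioo t₁ t₂ : Set (ℝ × ℝ))) =>
      Stmt9Aux.interior_calc u S hu (hIoosub hx)
    set f : ℝ × ℝ → ℝ := fun p => ⟪(u p).2, (fderivWithin ℝ u S p (0,1)).1⟫ with hfdef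
    set g : ℝ × ℝ → ℝ := fun p => -⟪(u p).2, (fderivWithin ℝ u S p (1,0)).1⟫ with hgdef
    have hdensint : IntegrableOn dens (Icc ((0:ℝ),t₁) ((1:ℝ),t₂)) :=
      (hdens_cont.mono (hIccsub t₁ t₂)).integrableOn_compact isCompact_Icc
    have hnull := Stmt9Aux.rect_boundary_null ((0:ℝ), t₁) ((1:ℝ), t₂)
    have haeeq : (fun x => fderiv ℝ f x (1,0) + fderiv ℝ g x (0,1))
        =ᵐ[volume.restrict (Icc ((0:ℝ),t₁) ((1:ℝ),t₂))] dens := by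
      rw [Filter.EventuallyEq, ae_restrict_iff' measurableSet_Icc]
      have hae2 : ∀ᵐ x : ℝ × ℝ,
          x ∉ (Icc ((0:ℝ),t₁) ((1:ℝ),t₂) \ (Ioo (0:ℝ) 1 ×ˢ Ioo t₁ t₂) : Set (ℝ × ℝ)) :=
        measure_eq_zero_iff_ae_notMem.1 hnull
      filter_upwards [hae2] with x hx hxIcc
      by_cases hxint : x ∈ (Ioo (0:ℝ) 1 ×ˢ Ioo t₁ t₂ : Set (ℝ × ℝ))
      · have h3 := (hcalc x hxint).2.2
        simp only [hdensdef, stdOmega]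
        exact h3
      · exact absurd ⟨hxIcc, hxint⟩ hx
    have hHi : IntegrableOn (fun x => fderiv ℝ f x (1,0) + fderiv ℝ g x (0,1))
        (Icc ((0:ℝ),t₁) ((1:ℝ),t₂)) := hdensint.congr haeeq.symm
    have key := integral_divergence_prod_Icc_of_hasFDerivAt_off_countable_of_le f g
      (fun x => fderiv ℝ f x) (fun x => fderiv ℝ g x)
      ((0:ℝ), t₁) ((1:ℝ), t₂) hab ∅ countable_empty
      (hf01cont.mono (hIccsub t₁ t₂)) ((hf10cont.mono (hIccsub t₁ t₂)).neg)
      (fun x hx => ((hcalc x hx.1).1).hasFDerivAt)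
      (fun x hx => ((hcalc x hx.1).2.1).hasFDerivAt)
      hHi
    have key2 : (∫ p in Icc ((0:ℝ),t₁) ((1:ℝ),t₂), dens p) =
        (((∫ x in (0:ℝ)..1, g (x, t₂)) - ∫ x in (0:ℝ)..1, g (x, t₁)) +
          ∫ y in t₁..t₂, f (1, y)) - ∫ y in t₁..t₂, f (0, y) := by
      rw [← integral_congr_ae haeeq]
      exact key
    have hf1 : ∀ y : ℝ, f ((1:ℝ), y) = 0 := fun y => by
      simp only [hfdef]; rw [hbc1 y, inner_zero_left]
    have hf0 : ∀ y : ℝ, f ((0:ℝ), y) = 0 := fun y => by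
      simp only [hfdef]; rw [hbt0 y, inner_zero_right]
    have hgt : ∀ t : ℝ, (∫ x in (0:ℝ)..1, g (x, t)) = -(A t) := by
      intro t
      rw [intervalIntegral.integral_of_le zero_le_one, ← integral_Icc_eq_integral_Ioc]
      simp only [hAdef, hgdef]
      rw [← integral_neg]
    have hz1 : (∫ y in t₁..t₂, f (1, y)) = 0 := by
      have : (fun y : ℝ => f (1, y)) = fun _ => (0:ℝ) := funext hf1
      rw [intervalIntegral.integral_congr (fun y _ => hf1 y), intervalIntegral.integral_zero]
    have hz0 : (∫ y in t₁..t₂, f (0, y)) = 0 := by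
      rw [intervalIntegral.integral_congr (fun y _ => hf0 y), intervalIntegral.integral_zero]
    rw [key2, hgt t₁, hgt t₂, hz1, hz0]
    ring
  -- the action is antitone
  have hAanti : Antitone A := by
    intro t₁ t₂ h12
    have h0 : 0 ≤ ∫ p in Icc ((0:ℝ),t₁) ((1:ℝ),t₂), dens p :=
      setIntegral_nonneg measurableSet_Icc fun p hp => hdens_nonneg p (hIccsub t₁ t₂ hp)
    rw [hGreen t₁ t₂ h12] at h0
    linarith
  -- the key quadratic decay inequality
  have hkey : ∀ t₁ t₂ b : ℝ, t₁ ≤ t₂ → 0 ≤ b → (∀ t ∈ Icc t₁ t₂, b ≤ |A t|) →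
      (c / M^2) * b^2 * (t₂ - t₁) ≤ A t₁ - A t₂ := by
    intro t₁ t₂ b h12 hb hbnd
    have hRsub : Icc ((0:ℝ),t₁) ((1:ℝ),t₂) ⊆ S := hIccsub t₁ t₂
    have hgsq_cont : ContinuousOn (fun p => ‖fderivWithin ℝ u S p (1,0)‖^2) S :=
      ((happly (1,0)).norm).pow 2
    have hgsqint : IntegrableOn (fun p => ‖fderivWithin ℝ u S p (1,0)‖^2)
        (Icc ((0:ℝ),t₁) ((1:ℝ),t₂)) :=
      (hgsq_cont.mono hRsub).integrableOn_compact isCompact_Icc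
    have hdensint : IntegrableOn dens (Icc ((0:ℝ),t₁) ((1:ℝ),t₂)) :=
      (hdens_cont.mono hRsub).integrableOn_compact isCompact_Icc
    have h1 : c * ∫ p in Icc ((0:ℝ),t₁) ((1:ℝ),t₂), ‖fderivWithin ℝ u S p (1,0)‖^2
        ≤ ∫ p in Icc ((0:ℝ),t₁) ((1:ℝ),t₂), dens p := by
      rw [← MeasureTheory.integral_const_mul]
      exact setIntegral_mono_on (hgsqint.const_mul c) hdensint measurableSet_Icc
        (fun p hp => hdens_lb p (hRsub hp))
    have hprodform : (Icc ((0:ℝ),t₁) ((1:ℝ),t₂) : Set (ℝ × ℝ)) = Icc (0:ℝ) 1 ×ˢ Icc t₁ t₂ :=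
      Icc_prod_eq _ _
    obtain ⟨hswapeq, hmarg⟩ := Stmt9Aux.swap_integrals
      (F := fun p => ‖fderivWithin ℝ u S p (1,0)‖^2) (s := Icc (0:ℝ) 1) (t := Icc t₁ t₂)
      (by rw [← hprodform]; exact hgsqint)
    have hinner : ∀ t ∈ Icc t₁ t₂,
        b^2 / M^2 ≤ ∫ x in Icc (0:ℝ) 1, ‖fderivWithin ℝ u S (x, t) (1,0)‖^2 := by
      intro t ht
      have hwcont : ContinuousOn (fun x : ℝ => ‖fderivWithin ℝ u S (x,t) (1,0)‖) (Icc 0 1) :=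
        ((happly (1,0)).comp (hslicecont t).continuousOn (hslice t)).norm
      have hφcont' : ContinuousOn
          (fun x : ℝ => ⟪(u (x,t)).2, (fderivWithin ℝ u S (x,t) (1,0)).1⟫) (Icc 0 1) :=
        hf10cont.comp (hslicecont t).continuousOn (hslice t)
      have hφint : IntegrableOn
          (fun x : ℝ => ⟪(u (x,t)).2, (fderivWithin ℝ u S (x,t) (1,0)).1⟫) (Icc 0 1) :=
        hφcont'.integrableOn_compact isCompact_Icc
      have habs : |A t| ≤ ∫ x in Icc (0:ℝ) 1, M * ‖fderivWithin ℝ u S (x,t) (1,0)‖ := by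
        simp only [hAdef]
        rw [← Real.norm_eq_abs]
        refine le_trans (norm_integral_le_integral_norm _) ?_
        refine setIntegral_mono_on (hφint.norm)
          ((continuousOn_const.mul hwcont).integrableOn_compact isCompact_Icc)
          measurableSet_Icc ?_
        intro x hx
        refine le_trans (norm_inner_le_norm _ _) ?_
        exact mul_le_mul (hM _ (hslice t hx)) (norm_fst_le _) (norm_nonneg _) hMpos.le
      have hCS := Stmt9Aux.sq_integral_le
        (h := fun x : ℝ => M * ‖fderivWithin ℝ u S (x,t) (1,0)‖)
        (continuousOn_const.mul hwcont)
      have h9 : (∫ x in Icc (0:ℝ) 1, (M * ‖fderivWithin ℝ u S (x,t) (1,0)‖)^2)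
          = M^2 * ∫ x in Icc (0:ℝ) 1, ‖fderivWithin ℝ u S (x,t) (1,0)‖^2 := by
        simp_rw [mul_pow]
        exact MeasureTheory.integral_const_mul _ _
      rw [h9] at hCS
      have h8 : (A t)^2 ≤ (∫ x in Icc (0:ℝ) 1, M * ‖fderivWithin ℝ u S (x,t) (1,0)‖)^2 := by
        rw [← sq_abs (A t)]
        exact pow_le_pow_left₀ (abs_nonneg _) habs 2
      have hb2 : b^2 ≤ (A t)^2 := by
        rw [← sq_abs (A t)]
        exact pow_le_pow_left₀ hb (hbnd t ht) 2
      rw [div_le_iff₀ (by positivity : (0:ℝ) < M^2), mul_comm]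
      linarith
    have houter : (b^2 / M^2) * (t₂ - t₁) ≤
        ∫ y in Icc t₁ t₂, ∫ x in Icc (0:ℝ) 1, ‖fderivWithin ℝ u S (x,y) (1,0)‖^2 := by
      have h10 := setIntegral_ge_of_const_le_real measurableSet_Icc
        (show volume (Icc t₁ t₂) < ⊤ from measure_Icc_lt_top).ne hinner hmarg
      rwa [measureReal_def, Real.volume_Icc, ENNReal.toReal_ofReal (by linarith)] at h10
    have hA12 := hGreen t₁ t₂ h12
    calc (c / M^2) * b^2 * (t₂-t₁) = c * ((b^2/M^2) * (t₂-t₁)) := by ring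
      _ ≤ c * ∫ y in Icc t₁ t₂, ∫ x in Icc (0:ℝ) 1, ‖fderivWithin ℝ u S (x,y) (1,0)‖^2 :=
          mul_le_mul_of_nonneg_left houter hcpos.le
      _ = c * ∫ p in Icc ((0:ℝ),t₁) ((1:ℝ),t₂), ‖fderivWithin ℝ u S p (1,0)‖^2 := by
          rw [hprodform, hswapeq]
      _ ≤ ∫ p in Icc ((0:ℝ),t₁) ((1:ℝ),t₂), dens p := h1
      _ = A t₁ - A t₂ := hA12
  -- the action vanishes identically
  have hk : (0:ℝ) < c / M^2 := by positivity
  have hA0 : ∀ t, A t = 0 := by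
    have hpos := Stmt9Aux.blowup hk hAanti hkey
    have hneg : ∀ t, 0 ≤ -A (-t) := by
      refine Stmt9Aux.blowup hk ?_ ?_
      · intro t₁ t₂ h12
        exact neg_le_neg (hAanti (neg_le_neg h12))
      · intro t₁ t₂ b h12 hb hbnd
        have hbnd' : ∀ t ∈ Icc (-t₂) (-t₁), b ≤ |A t| := by
          intro t ht
          have h5 := hbnd (-t) ⟨by linarith [ht.2], by linarith [ht.1]⟩
          rwa [neg_neg, abs_neg] at h5
        have h' := hkey (-t₂) (-t₁) b (by linarith) hb hbnd'
        have h'' : (c/M^2) * b^2 * (t₂ - t₁) ≤ A (-t₂) - A (-t₁) := by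
          rw [show t₂ - t₁ = (-t₁) - (-t₂) by ring]
          exact h'
        linarith
    intro t
    have h1 := hpos t
    have h2 := hneg (-t)
    rw [neg_neg] at h2
    linarith
  -- zero action forces the derivative to vanish on the interior
  have hw1zero : ∀ p ∈ interior S, fderivWithin ℝ u S p (1,0) = 0 := by
    intro p hp
    by_contra hne
    have hdp : 0 < dens p := by
      have h6 := hdens_lb p (interior_subset hp)
      have hnorm : (0:ℝ) < ‖fderivWithin ℝ u S p (1,0)‖^2 := by
        have := norm_pos_iff.2 hne
        positivity
      nlinarith
    have hca : ContinuousAt dens p :=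
      (hdens_cont p (interior_subset hp)).continuousAt (mem_interior_iff_mem_nhds.1 hp)
    have hev : dens ⁻¹' (Ioi (dens p / 2)) ∈ nhds p :=
      hca (Ioi_mem_nhds (by linarith : dens p / 2 < dens p))
    have hU : interior S ∈ nhds p := isOpen_interior.mem_nhds hp
    obtain ⟨r, hrpos, hball⟩ := Metric.nhds_basis_closedBall.mem_iff.1 (Filter.inter_mem hev hU)
    have hballS : Metric.closedBall p r ⊆ S :=
      subset_trans (subset_trans hball inter_subset_right) interior_subset
    -- the closed ball is a sub-rectangle of a strip rectangle
    have hsubR : Metric.closedBall p r ⊆ Icc ((0:ℝ), p.2 - r) ((1:ℝ), p.2 + r) := by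
      intro q hq
      have hq1 : q ∈ interior S := (hball hq).2
      rw [hSint] at hq1
      have hq2 : q ∈ Metric.closedBall p r := hq
      rw [← Prod.mk.eta (p := p), ← closedBall_prod_same] at hq2
      have hq2' := hq2.2
      rw [Real.closedBall_eq_Icc] at hq2'
      exact ⟨⟨hq1.1.1.le, hq2'.1⟩, ⟨hq1.1.2.le, hq2'.2⟩⟩
    have hbig : (∫ q in Icc ((0:ℝ), p.2 - r) ((1:ℝ), p.2 + r), dens q) = 0 := by
      rw [hGreen _ _ (by linarith), hA0, hA0, sub_zero]
    have hint_big : IntegrableOn dens (Icc ((0:ℝ), p.2 - r) ((1:ℝ), p.2 + r)) :=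
      (hdens_cont.mono (hIccsub _ _)).integrableOn_compact isCompact_Icc
    have hmono : (∫ q in Metric.closedBall p r, dens q)
        ≤ ∫ q in Icc ((0:ℝ), p.2 - r) ((1:ℝ), p.2 + r), dens q := by
      refine setIntegral_mono_set hint_big ?_ (HasSubset.Subset.eventuallyLE hsubR)
      rw [Filter.EventuallyLE, ae_restrict_iff' measurableSet_Icc]
      exact Filter.Eventually.of_forall fun q hq => hdens_nonneg q (hIccsub _ _ hq)
    have hlb2 : (dens p / 2) * (volume (Metric.closedBall p r)).toReal
        ≤ ∫ q in Metric.closedBall p r, dens q := by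
      refine setIntegral_ge_of_const_le_real measurableSet_closedBall
        (show volume (Metric.closedBall p r) < ⊤ from measure_closedBall_lt_top).ne
        (fun q hq => le_of_lt (hball hq).1)
        ((hdens_cont.mono hballS).integrableOn_compact (isCompact_closedBall _ _))
    have hvolpos : 0 < (volume (Metric.closedBall p r)).toReal :=
      ENNReal.toReal_pos (Metric.measure_closedBall_pos volume p hrpos).ne'
        measure_closedBall_lt_top.ne
    nlinarith
  -- the derivative vanishes on all of `S`
  have hvzero : ∀ p ∈ S, ‖fderivWithin ℝ u S p‖ = 0 := by
    have hint : ∀ p ∈ interior S, fderivWithin ℝ u S p = 0 := by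
      intro p hp
      have h1 := hw1zero p hp
      have h2 : fderivWithin ℝ u S p (0,1) = 0 := by
        rw [hw2 p (interior_subset hp), h1, map_zero]
      apply ContinuousLinearMap.ext
      intro q
      have hq : (q : ℝ × ℝ) = q.1 • ((1:ℝ),(0:ℝ)) + q.2 • ((0:ℝ),(1:ℝ)) := by
        apply Prod.ext <;> simp
      have hval : (fderivWithin ℝ u S p) q = 0 := by
        conv_lhs => rw [hq]
        rw [map_add, ContinuousLinearMap.map_smul, ContinuousLinearMap.map_smul, h1, h2]
        simp
      simpa using hval
    intro p hp
    have hclos : p ∈ closure (interior S) := by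
      rw [hSint, closure_prod_eq, closure_Ioo (zero_ne_one' ℝ), closure_univ, ← hSdef]
      exact hp
    have ht : Filter.Tendsto (fun q => ‖fderivWithin ℝ u S q‖) (nhdsWithin p (interior S))
        (nhds ‖fderivWithin ℝ u S p‖) :=
      ((hvcont p hp).norm).mono_left (nhdsWithin_mono p interior_subset)
    have ht2 : Filter.Tendsto (fun q => ‖fderivWithin ℝ u S q‖)
        (nhdsWithin p (interior S)) (nhds 0) := by
      refine Filter.Tendsto.congr' ?_ tendsto_const_nhds
      filter_upwards [self_mem_nhdsWithin] with q hq
      rw [hint q hq, norm_zero]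
    haveI : (nhdsWithin p (interior S)).NeBot := mem_closure_iff_nhdsWithin_neBot.1 hclos
    exact tendsto_nhds_unique ht ht2
  -- mean value inequality: `u` is constant
  have hfinal := hSconv.norm_image_sub_le_of_norm_fderivWithin_le hdiff
    (C := 0) (fun p hp => le_of_eq (hvzero p hp)) hw hz
  rw [zero_mul] at hfinal
  exact sub_eq_zero.1 (norm_le_zero_iff.1 hfinal)
end

section
/- Let r : ℝ^n × ℝ^n → [0,∞) be continuous with r(q,p) > 0 whenever p ≠ 0 and r(q, c·p) = c · r(q,p) for all c ≥ 0, and set Ω = {(q,p) : r(q,p) ≤ 1}. Let H : ℝ/ℤ × ℝ^{2n} → ℝ be C¹ and satisfy H(t, q, e^s p) = e^s H(t, q, p) for all s ≥ 0 whenever r(q,p) ≥ 1, and suppose m(t) := inf_{q ∈ ℝ^n} H(t, q, 0) is finite for each t with ∫₀¹ m(t) dt > −∞. Let b : ℝ/ℤ → ℝ^n be a C¹ loop, and assume H is sufficiently negative for b and Ω, meaning: every continuous p : ℝ/ℤ → ℝ^n with r(b(t), p(t)) > 1 for all t satisfies 𝒜(b,p) ≤ 0, where 𝒜(b,p) = ∫₀¹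 H(t, b(t), p(t)) dt − ∫₀¹ ⟨p(t), b'(t)⟩ dt. Define κ = inf{ ∫₀¹ ⟨p(t), b'(t)⟩ dt : p : ℝ/ℤ → ℝ^n continuous with r(b(t), p(t)) ≤ 1 for all t }. Then κ is finite and κ ≤ 0, and for every smooth 1-periodic family J_t of ω-tame almost complex structures and every ℓ > 0, any smooth solution u : [0, ℓ] × ℝ/ℤ → ℝ^{2n} of the Floer equation ∂_s u + J_t(u)(∂_t u − X_{H_t}(u)) = 0 whose left end is a lift of b (i.e., the first component of u(0,t) equals b(t) for all t) and whose right end lies on the zero section (u(ℓ,t) ∈ ℝ^n × {0} for all t) satisfies the a priori energy bound E(u) = ∫₀¹∫₀^ℓ ω(∂_s u, J_t(u) ∂_s u) ds dt ≤ ∫₀¹ max{ H(t, b(t), p) : p ∈ ℝ^n, r(b(t), p) ≤ 1 } dt − ∫₀¹ m(t) dt − κ. -/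
open MeasureTheory Set
open scoped RealInnerProductSpace

section Aux
variable {n : ℕ}
local notation "E" => EuclideanSpace ℝ (Fin n)

lemma aux_r_zero (r : E → E → ℝ)
    (hrhom : ∀ q p, ∀ c : ℝ, 0 ≤ c → r q (c • p) = c * r q p) (q : E) :
    r q 0 = 0 := by
  have := hrhom q 0 0 le_rfl
  simpa using this

lemma aux_bound (r : E → E → ℝ)
    (hrcont : Continuous fun z : E × E => r z.1 z.2)
    (hrpos : ∀ q p, p ≠ 0 → 0 < r q p)
    (hrhom : ∀ q p, ∀ c : ℝ, 0 ≤ c → r q (c • p) = c * r q p)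
    (b : ℝ → E) (hbc : Continuous b) :
    ∃ C : ℝ, 0 < C ∧ ∀ t ∈ Icc (0:ℝ) 1, ∀ p : E, r (b t) p ≤ 1 → ‖p‖ ≤ C := by
  rcases isEmpty_or_nonempty (Fin n) with hE | hE
  · refine ⟨1, one_pos, fun t _ p _ => ?_⟩
    have : ‖p‖ = 0 := by
      simp [EuclideanSpace.norm_eq]
    simp [this]
  · -- compact set of (q, unit vector)
    set K : Set (E × E) := (b '' Icc (0:ℝ) 1) ×ˢ Metric.sphere (0:E) 1 with hK
    have hKc : IsCompact K := (isCompact_Icc.image hbc).prod (isCompact_sphere 0 1)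
    have hKne : K.Nonempty := by
      refine ⟨(b 0, EuclideanSpace.single (Classical.arbitrary (Fin n)) (1:ℝ)), ?_, ?_⟩
      · exact ⟨0, by simp, rfl⟩
      · simp [EuclideanSpace.norm_single]
    obtain ⟨z₀, hz₀K, hmin⟩ := hKc.exists_isMinOn hKne hrcont.continuousOn
    have hz₀2 : z₀.2 ≠ 0 := by
      have : ‖z₀.2‖ = 1 := by
        have := hz₀K.2
        simpa using this
      intro h; rw [h] at this; simp at this
    set ε : ℝ := r z₀.1 z₀.2 with hε
    have hεpos : 0 < ε := hrpos _ _ hz₀2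
    refine ⟨ε⁻¹ + 1, by positivity, fun t ht p hp => ?_⟩
    rcases eq_or_ne p 0 with rfl | hp0
    · simp; positivity
    · have hpn : (0:ℝ) < ‖p‖ := norm_pos_iff.2 hp0
      have hmem : (b t, ‖p‖⁻¹ • p) ∈ K := by
        constructor
        · exact ⟨t, ht, rfl⟩
        · simp [norm_smul, abs_of_pos (inv_pos.2 hpn), inv_mul_cancel₀ hpn.ne']
      have h1 : ε ≤ r (b t) (‖p‖⁻¹ • p) := hmin hmem
      have h2 : r (b t) p = ‖p‖ * r (b t) (‖p‖⁻¹ • p) := by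
        have := hrhom (b t) (‖p‖⁻¹ • p) ‖p‖ (norm_nonneg p)
        rw [smul_smul, mul_inv_cancel₀ hpn.ne', one_smul] at this
        exact this
      have : ‖p‖ * ε ≤ 1 := by
        calc ‖p‖ * ε ≤ ‖p‖ * r (b t) (‖p‖⁻¹ • p) := by
              exact mul_le_mul_of_nonneg_left h1 hpn.le
          _ = r (b t) p := h2.symm
          _ ≤ 1 := hp
      have : ‖p‖ ≤ ε⁻¹ := by
        rw [inv_eq_one_div, le_div_iff₀ hεpos]
        exact this
      linarith

end Aux

section Aux2
variable {n : ℕ}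
local notation "E" => EuclideanSpace ℝ (Fin n)
local notation "π" => Real.pi

set_option maxHeartbeats 2000000 in
lemma aux_pointwise (r : E → E → ℝ)
    (hrcont : Continuous fun z : E × E => r z.1 z.2)
    (hrpos : ∀ q p, p ≠ 0 → 0 < r q p)
    (hrhom : ∀ q p, ∀ c : ℝ, 0 ≤ c → r q (c • p) = c * r q p)
    (H : ℝ → (E × E) → ℝ) (hH : ContDiff ℝ 1 (Function.uncurry H))
    (hHper : ∀ z, Function.Periodic (fun t => H t z) 1)
    (hHhom : ∀ t q p, ∀ s : ℝ, 0 ≤ s → 1 ≤ r q p →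
      H t (q, Real.exp s • p) = Real.exp s * H t (q, p))
    (b : ℝ → E) (hb : ContDiff ℝ 1 b) (hbper : Function.Periodic b 1)
    (hneg : ∀ p : ℝ → E, Continuous p → Function.Periodic p 1 →
      (∀ t, 1 < r (b t) (p t)) →
      (∫ t in (0:ℝ)..1, H t (b t, p t)) - (∫ t in (0:ℝ)..1, ⟪p t, deriv b t⟫) ≤ 0) :
    ∀ t₀ : ℝ, ∀ v : E, r (b t₀) v = 1 → H t₀ (b t₀, v) ≤ ⟪v, deriv b t₀⟫ := by
  intro t₀ v hv
  have hv0 : v ≠ 0 := by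
    intro h
    rw [h] at hv
    have : r (b t₀) (0:E) = 0 := by
      have := hrhom (b t₀) 0 0 le_rfl; simpa using this
    rw [this] at hv; norm_num at hv
  have hrv : ∀ t, 0 < r (b t) v := fun t => hrpos _ _ hv0
  set q : ℝ → E := fun t => (r (b t) v)⁻¹ • v with hqdef
  have hrbv : Continuous fun t => r (b t) v :=
    hrcont.comp ((hb.continuous).prodMk continuous_const)
  have hqc : Continuous q :=
    (hrbv.inv₀ (fun t => (hrv t).ne')).smul continuous_const
  have hqper : Function.Periodic q 1 := by
    intro t; simp only [hqdef, hbper t]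
  have hrq : ∀ t, r (b t) (q t) = 1 := by
    intro t
    rw [hqdef]
    simp only
    rw [hrhom _ _ _ (inv_nonneg.2 (hrv t).le), inv_mul_cancel₀ (hrv t).ne']
  have hqt₀ : q t₀ = v := by
    simp only [hqdef, hv, inv_one, one_smul]
  have hb' : Continuous (deriv b) := hb.continuous_deriv le_rfl
  have hb'per : Function.Periodic (deriv b) 1 := by
    intro t
    have : deriv (fun x => b (x + 1)) t = deriv b (t + 1) := deriv_comp_add_const b 1 t
    rw [← this]
    congr 1
    funext x
    exact hbper x
  set ψ : ℝ → ℝ := fun t => H t (b t, q t) - ⟪q t, deriv b t⟫ with hψdef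
  have hψc : Continuous ψ := by
    apply Continuous.sub
    · exact hH.continuous.comp (continuous_id.prodMk ((hb.continuous).prodMk hqc))
    · exact continuous_inner.comp (hqc.prodMk hb')
  have hψper : Function.Periodic ψ 1 := by
    intro t
    simp only [hψdef, hqper t, hbper t, hb'per t, hHper (b t, q t) t]
  -- main consequence of hneg
  have key : ∀ K : ℝ, 0 ≤ K → ∀ g : ℝ → ℝ, Continuous g → Function.Periodic g 1 →
      (∀ t, 0 ≤ g t) →
      (∫ t in (0:ℝ)..1, (2 * (1 + K * g t)) * ψ t) ≤ 0 := by
    intro K hK g hgc hgper hgnn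
    set w : ℝ → ℝ := fun t => 2 * (1 + K * g t) with hwdef
    have hw1 : ∀ t, 1 ≤ w t := by
      intro t
      have := mul_nonneg hK (hgnn t)
      simp only [hwdef]; nlinarith
    have hwc : Continuous w := by
      simp only [hwdef]
      exact continuous_const.mul (continuous_const.add (continuous_const.mul hgc))
    set p : ℝ → E := fun t => w t • q t with hpdef
    have hpc : Continuous p := hwc.smul hqc
    have hpper : Function.Periodic p 1 := by
      intro t; simp only [hpdef, hwdef, hgper t, hqper t]
    have hrp : ∀ t, 1 < r (b t) (p t) := by
      intro t
      have h := hrhom (b t) (q t) (w t) (by linarith [hw1 t])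
      simp only [hpdef]
      rw [h, hrq t, mul_one]
      have := mul_nonneg hK (hgnn t)
      simp only [hwdef]; nlinarith
    have hHp : ∀ t, H t (b t, p t) = w t * H t (b t, q t) := by
      intro t
      have hwpos : (0:ℝ) < w t := by linarith [hw1 t]
      have hlog : Real.exp (Real.log (w t)) = w t := Real.exp_log hwpos
      have := hHhom t (b t) (q t) (Real.log (w t)) (Real.log_nonneg (hw1 t)) (le_of_eq (hrq t).symm)
      rwa [hlog] at this
    have hinner : ∀ t, ⟪p t, deriv b t⟫ = w t * ⟪q t, deriv b t⟫ := by
      intro t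
      simp only [hpdef, real_inner_smul_left]
    have h := hneg p hpc hpper hrp
    have hHc : Continuous fun t => H t (b t, q t) :=
      hH.continuous.comp (continuous_id.prodMk ((hb.continuous).prodMk hqc))
    have hIc : Continuous fun t => ⟪q t, deriv b t⟫ :=
      continuous_inner.comp (hqc.prodMk hb')
    have e1 : (∫ t in (0:ℝ)..1, H t (b t, p t)) = ∫ t in (0:ℝ)..1, w t * H t (b t, q t) := by
      apply intervalIntegral.integral_congr
      intro t _; exact hHp t
    have e2 : (∫ t in (0:ℝ)..1, ⟪p t, deriv b t⟫) = ∫ t in (0:ℝ)..1, w t * ⟪q t, deriv b t⟫ := by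
      apply intervalIntegral.integral_congr
      intro t _; exact hinner t
    rw [e1, e2] at h
    have e3 : (∫ t in (0:ℝ)..1, (2 * (1 + K * g t)) * ψ t)
        = (∫ t in (0:ℝ)..1, w t * H t (b t, q t)) - ∫ t in (0:ℝ)..1, w t * ⟪q t, deriv b t⟫ := by
      rw [← intervalIntegral.integral_sub]
      · apply intervalIntegral.integral_congr
        intro t _
        simp only [hψdef, hwdef]; ring
      · exact (hwc.mul hHc).intervalIntegrable _ _
      · exact (hwc.mul hIc).intervalIntegrable _ _
    rw [e3]
    exact h
  -- now argue by contradiction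
  by_contra hcon
  push_neg at hcon
  have hψt₀ : 0 < ψ t₀ := by
    simp only [hψdef, hqt₀]
    linarith
  set c : ℝ := ψ t₀ / 2 with hcdef
  have hcpos : 0 < c := by positivity
  obtain ⟨δ₁, hδ₁pos, hδ₁⟩ : ∃ δ₁ > 0, ∀ t, |t - t₀| < δ₁ → c < ψ t := by
    have hca : ContinuousAt ψ t₀ := hψc.continuousAt
    obtain ⟨δ₁, hδ₁pos, hδ₁⟩ := Metric.continuousAt_iff.1 hca c hcpos
    refine ⟨δ₁, hδ₁pos, fun t ht => ?_⟩
    have h2 := hδ₁ (show dist t t₀ < δ₁ by rwa [Real.dist_eq])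
    rw [Real.dist_eq] at h2
    have h3 := (abs_lt.1 h2).1
    rw [hcdef] at h3 ⊢
    linarith
  set δ : ℝ := min (δ₁ / 2) 4⁻¹ with hδdef
  have hδpos : 0 < δ := by positivity
  have hδ₁' : δ < δ₁ := by
    have : δ ≤ δ₁ / 2 := min_le_left _ _
    linarith
  have hδ4 : δ ≤ 4⁻¹ := min_le_right _ _
  have hπpos : 0 < π := Real.pi_pos
  set g : ℝ → ℝ := fun t => max 0 (Real.cos (2*π*(t - t₀)) - Real.cos (2*π*δ)) with hgdef
  have hgc : Continuous g := by
    apply Continuous.max continuous_const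
    have : Continuous fun t : ℝ => 2*π*(t - t₀) :=
      continuous_const.mul (continuous_id.sub continuous_const)
    exact (Real.continuous_cos.comp this).sub continuous_const
  have hgper : Function.Periodic g 1 := by
    intro t
    have : 2*π*(t + 1 - t₀) = 2*π*(t - t₀) + 2*π := by ring
    simp only [hgdef, this, Real.cos_add_two_pi]
  have hgnn : ∀ t, 0 ≤ g t := fun t => le_max_left _ _
  -- g positive implies close to t₀ (within half-period)
  have hsupp : ∀ t, |t - t₀| ≤ 2⁻¹ → 0 < g t → |t - t₀| < δ := by
    intro t ht hg
    by_contra hge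
    push_neg at hge
    have hcos : Real.cos (2*π*(t-t₀)) ≤ Real.cos (2*π*δ) := by
      rw [← Real.cos_abs (2*π*(t-t₀))]
      have habs : |2*π*(t-t₀)| = 2*π*|t-t₀| := by
        rw [abs_mul, abs_of_pos (by positivity : (0:ℝ) < 2*π)]
      rw [habs]
      apply Real.cos_le_cos_of_nonneg_of_le_pi
      · positivity
      · nlinarith
      · nlinarith
    simp only [hgdef] at hg
    have : Real.cos (2*π*(t - t₀)) - Real.cos (2*π*δ) ≤ 0 := by linarith
    rw [max_eq_left this] at hg
    exact lt_irrefl _ hg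
  -- lower bound for g on the inner interval
  set g₀ : ℝ := Real.cos (2*π*(δ/2)) - Real.cos (2*π*δ) with hg₀def
  have hg₀pos : 0 < g₀ := by
    simp only [hg₀def]
    have := Real.cos_lt_cos_of_nonneg_of_le_pi
      (x := 2*π*(δ/2)) (y := 2*π*δ) (by positivity) (by nlinarith) (by nlinarith)
    linarith
  have hglb : ∀ t, |t - t₀| ≤ δ/2 → g₀ ≤ g t := by
    intro t ht
    have hcos : Real.cos (2*π*(δ/2)) ≤ Real.cos (2*π*(t-t₀)) := by
      rw [← Real.cos_abs (2*π*(t-t₀))]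
      have habs : |2*π*(t-t₀)| = 2*π*|t-t₀| := by
        rw [abs_mul, abs_of_pos (by positivity : (0:ℝ) < 2*π)]
      rw [habs]
      apply Real.cos_le_cos_of_nonneg_of_le_pi
      · positivity
      · nlinarith [abs_nonneg (t - t₀)]
      · nlinarith
    simp only [hgdef, hg₀def]
    have : Real.cos (2*π*(δ/2)) - Real.cos (2*π*δ) ≤
        Real.cos (2*π*(t-t₀)) - Real.cos (2*π*δ) := by linarith
    exact le_trans this (le_max_right _ _)
  set a : ℝ := t₀ - 2⁻¹ with hadef
  set S₁ : ℝ := ∫ t in a..(a+1), ψ t with hS₁def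
  set S₂ : ℝ := ∫ t in a..(a+1), g t * ψ t with hS₂def
  -- gψ nonneg on [a, a+1]
  have hgψnn : ∀ t ∈ Icc a (a+1), 0 ≤ g t * ψ t := by
    intro t ht
    rcases eq_or_lt_of_le (hgnn t) with h | h
    · rw [← h, zero_mul]
    · have habs : |t - t₀| ≤ 2⁻¹ := by
        rw [abs_le]
        constructor <;> [skip; skip] <;>
          · simp only [hadef] at ht; cases' ht with h1 h2; linarith
      have h4 := hsupp t habs h
      have h5 := hδ₁ t (lt_trans h4 hδ₁')
      exact le_of_lt (mul_pos h (lt_trans hcpos h5))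
  -- S₂ is at least g₀ * c * δ
  have hS₂lb : g₀ * c * δ ≤ S₂ := by
    have hint : ∀ x y : ℝ, IntervalIntegrable (fun t => g t * ψ t) volume x y :=
      fun x y => (hgc.mul hψc).intervalIntegrable x y
    have hsplit : S₂ = (∫ t in a..(t₀ - δ/2), g t * ψ t)
        + ((∫ t in (t₀ - δ/2)..(t₀ + δ/2), g t * ψ t)
          + ∫ t in (t₀ + δ/2)..(a+1), g t * ψ t) := by
      rw [intervalIntegral.integral_add_adjacent_intervals (hint (t₀ - δ/2) (t₀ + δ/2))
        (hint (t₀ + δ/2) (a+1)),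
        intervalIntegral.integral_add_adjacent_intervals (hint a (t₀ - δ/2))
        ((hint (t₀ - δ/2) (t₀ + δ/2)).trans (hint (t₀ + δ/2) (a+1)))]
    have h1 : 0 ≤ ∫ t in a..(t₀ - δ/2), g t * ψ t := by
      apply intervalIntegral.integral_nonneg
      · simp only [hadef]; linarith
      · intro t ht
        apply hgψnn
        simp only [hadef] at ht ⊢
        exact ⟨ht.1, by cases' ht with h1 h2; linarith⟩
    have h3 : 0 ≤ ∫ t in (t₀ + δ/2)..(a+1), g t * ψ t := by
      apply intervalIntegral.integral_nonneg
      · simp only [hadef]; linarith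
      · intro t ht
        apply hgψnn
        simp only [hadef] at ht ⊢
        exact ⟨by cases' ht with h1 h2; linarith, ht.2⟩
    have h2 : g₀ * c * δ ≤ ∫ t in (t₀ - δ/2)..(t₀ + δ/2), g t * ψ t := by
      have hconst : (∫ _ in (t₀ - δ/2)..(t₀ + δ/2), (g₀ * c)) = g₀ * c * δ := by
        rw [intervalIntegral.integral_const]
        simp only [smul_eq_mul]
        ring
      rw [← hconst]
      apply intervalIntegral.integral_mono_on (by linarith)
        (intervalIntegrable_const) (hint _ _)
      intro t ht
      have habs : |t - t₀| ≤ δ/2 := by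
        rw [abs_le]; constructor <;> · cases' ht with h1 h2; linarith
      have hgt := hglb t habs
      have hψt : c ≤ ψ t := le_of_lt (hδ₁ t (by linarith [abs_le.1 habs]; ))
      calc g₀ * c ≤ g t * ψ t := by
            apply mul_le_mul hgt hψt (le_of_lt hcpos)
            exact le_trans (le_of_lt hg₀pos) hgt
        _ = g t * ψ t := rfl
    rw [hsplit]
    linarith
  have hn' : ∀ K : ℝ, 0 ≤ K → (∫ t in a..(a+1), (2 * (1 + K * g t)) * ψ t) ≤ 0 := by
    intro K hK
    have hper : Function.Periodic (fun t => (2 * (1 + K * g t)) * ψ t) 1 := by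
      intro t; simp only [hgper t, hψper t]
    have heq := hper.intervalIntegral_add_eq a 0
    rw [zero_add] at heq
    rw [heq]
    exact key K hK g hgc hgper hgnn
  have hlin : ∀ K : ℝ, 0 ≤ K → (∫ t in a..(a+1), (2 * (1 + K * g t)) * ψ t)
      = 2 * S₁ + (2*K) * S₂ := by
    intro K hK
    have h1 : IntervalIntegrable (fun t => 2 * ψ t) volume a (a+1) :=
      (continuous_const.mul hψc).intervalIntegrable _ _
    have h2 : IntervalIntegrable (fun t => (2*K) * (g t * ψ t)) volume a (a+1) :=
      (continuous_const.mul (hgc.mul hψc)).intervalIntegrable _ _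
    have hcg : (∫ t in a..(a+1), (2 * (1 + K * g t)) * ψ t)
        = ∫ t in a..(a+1), (2 * ψ t + (2*K) * (g t * ψ t)) := by
      apply intervalIntegral.integral_congr; intro t _; ring
    rw [hcg, intervalIntegral.integral_add h1 h2,
      intervalIntegral.integral_const_mul, intervalIntegral.integral_const_mul]
  set K := (1 + |S₁|) / (g₀ * c * δ) with hKdef
  have hKnn : 0 ≤ K := by positivity
  have hKS : K * (g₀ * c * δ) = 1 + |S₁| := by
    rw [hKdef]
    field_simp
  have hfin := hn' K hKnn
  rw [hlin K hKnn] at hfin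
  have h6 : K * (g₀ * c * δ) ≤ K * S₂ := mul_le_mul_of_nonneg_left hS₂lb hKnn
  have h7 : (2*K)*S₂ = 2*(K*S₂) := by ring
  linarith [neg_abs_le S₁]

end Aux2

section Aux3
variable {n : ℕ}
local notation "E" => EuclideanSpace ℝ (Fin n)

lemma aux_M (r : E → E → ℝ)
    (hrcont : Continuous fun z : E × E => r z.1 z.2)
    (hrhom : ∀ q p, ∀ c : ℝ, 0 ≤ c → r q (c • p) = c * r q p)
    (H : ℝ → (E × E) → ℝ) (hHc : Continuous (Function.uncurry H))
    (b : ℝ → E) (hbc : Continuous b)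
    (C : ℝ) (hCpos : 0 < C)
    (hC : ∀ t ∈ Icc (0:ℝ) 1, ∀ p : E, r (b t) p ≤ 1 → ‖p‖ ≤ C) :
    ∃ M : ℝ → ℝ, Continuous M ∧
      (∀ t ∈ Icc (0:ℝ) 1, M t = sSup {x | ∃ p : E, r (b t) p ≤ 1 ∧ x = H t (b t, p)}) ∧
      (∀ t ∈ Icc (0:ℝ) 1, ∀ p : E, r (b t) p ≤ 1 → H t (b t, p) ≤ M t) := by
  have hmax : ∀ t (x : E), 0 < max 1 (r (b t) x) := fun t x => lt_max_of_lt_left one_pos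
  set Pi : ℝ → E → E := fun t x => (max 1 (r (b t) x))⁻¹ • x with hPidef
  have hrbx : Continuous fun w : ℝ × E => r (b w.1) w.2 :=
    hrcont.comp ((hbc.comp continuous_fst).prodMk continuous_snd)
  have hPic : Continuous fun w : ℝ × E => Pi w.1 w.2 := by
    show Continuous fun w : ℝ × E => (max 1 (r (b w.1) w.2))⁻¹ • w.2
    refine Continuous.smul (f := fun w : ℝ × E => (max 1 (r (b w.1) w.2))⁻¹) (g := fun w : ℝ × E => w.2) ?_ ?_
    · exact (continuous_const.max hrbx).inv₀ (fun w => (hmax w.1 w.2).ne')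
    · exact continuous_snd
  have hPiid : ∀ t (x : E), r (b t) x ≤ 1 → Pi t x = x := by
    intro t x hx
    simp only [hPidef, max_eq_left hx, inv_one, one_smul]
  have hPir : ∀ t (x : E), r (b t) (Pi t x) ≤ 1 := by
    intro t x
    simp only [hPidef]
    rw [hrhom _ _ _ (inv_nonneg.2 (hmax t x).le)]
    calc (max 1 (r (b t) x))⁻¹ * r (b t) x
        ≤ (max 1 (r (b t) x))⁻¹ * max 1 (r (b t) x) :=
          mul_le_mul_of_nonneg_left (le_max_right _ _) (inv_nonneg.2 (hmax t x).le)
      _ = 1 := inv_mul_cancel₀ (hmax t x).ne'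
  set G : ℝ → E → ℝ := fun t x => H t (b t, Pi t x) with hGdef
  have hGc : Continuous ↿G := by
    have : Continuous fun w : ℝ × E => H w.1 (b w.1, Pi w.1 w.2) :=
      hHc.comp (continuous_fst.prodMk ((hbc.comp continuous_fst).prodMk hPic))
    exact this
  set B : Set E := Metric.closedBall 0 C with hBdef
  have hBc : IsCompact B := isCompact_closedBall 0 C
  refine ⟨fun t => sSup (G t '' B), hBc.continuous_sSup hGc, ?_, ?_⟩
  · intro t ht
    apply congrArg sSup
    ext x
    constructor
    · rintro ⟨p, hpB, rfl⟩
      exact ⟨Pi t p, hPir t p, rfl⟩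
    · rintro ⟨p, hp, rfl⟩
      refine ⟨p, ?_, by simp only [hGdef]; rw [hPiid t p hp]⟩
      simp only [hBdef, Metric.mem_closedBall, dist_zero_right]
      exact hC t ht p hp
  · intro t ht p hp
    have hmem : H t (b t, p) ∈ G t '' B := by
      refine ⟨p, ?_, by simp only [hGdef]; rw [hPiid t p hp]⟩
      simp only [hBdef, Metric.mem_closedBall, dist_zero_right]
      exact hC t ht p hp
    have hGtc : Continuous (G t) := hGc.comp (Continuous.prodMk_right t)
    exact le_csSup (hBc.bddAbove_image hGtc.continuousOn) hmem

end Aux3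

section Aux4
variable {n : ℕ}
local notation "E" => EuclideanSpace ℝ (Fin n)

lemma stdOmega_sub_right (v w w' : E × E) :
    stdOmega v (w - w') = stdOmega v w - stdOmega v w' := by
  simp only [stdOmega, Prod.fst_sub, Prod.snd_sub, inner_sub_right]
  ring

lemma stdOmega_skew (v w : E × E) : stdOmega v w = - stdOmega w v := by
  simp only [stdOmega]
  rw [real_inner_comm v.2 w.1, real_inner_comm v.1 w.2]
  ring

set_option maxHeartbeats 4000000 in
lemma aux_energy
    (H : ℝ → (E × E) → ℝ) (hH : ContDiff ℝ 1 (Function.uncurry H))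
    (X : ℝ → (E × E) → (E × E))
    (hX : ∀ t z v, stdOmega (X t z) v = -(fderiv ℝ (H t) z v))
    (J : ℝ → (E × E) → ((E × E) →L[ℝ] (E × E)))
    (hJsq : ∀ t z v, J t z (J t z v) = -v)
    (ℓ : ℝ) (hℓ : 0 < ℓ)
    (u : ℝ × ℝ → E × E) (hu : ContDiff ℝ (⊤ : ℕ∞) u)
    (huper : ∀ s t, u (s, t + 1) = u (s, t))
    (hFloer : ∀ s ∈ Icc (0:ℝ) ℓ, ∀ t : ℝ,
      fderiv ℝ u (s, t) (1, 0) + J t (u (s, t)) (fderiv ℝ u (s, t) (0, 1) - X t (u (s, t))) = 0) :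
    (∫ t in (0:ℝ)..1, ∫ s in (0:ℝ)..ℓ,
        stdOmega (fderiv ℝ u (s, t) (1, 0)) (J t (u (s, t)) (fderiv ℝ u (s, t) (1, 0))))
    = ∫ t in (0:ℝ)..1,
        ((⟪(u (ℓ, t)).2, (fderiv ℝ u (ℓ, t) (0, 1)).1⟫ - H t (u (ℓ, t)))
          - (⟪(u (0, t)).2, (fderiv ℝ u (0, t) (0, 1)).1⟫ - H t (u (0, t)))) := by
  have hu1 : ContDiff ℝ 1 u := hu.of_le (by simp)
  have hU' : ContDiff ℝ 1 (fderiv ℝ u) := hu.fderiv_right (WithTop.coe_le_coe.2 le_top)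
  have hudiff : Differentiable ℝ u := hu1.differentiable one_ne_zero
  have hU'diff : Differentiable ℝ (fderiv ℝ u) := hU'.differentiable one_ne_zero
  set us : ℝ × ℝ → E × E := fun z => fderiv ℝ u z (1, 0) with husdef
  set ut : ℝ × ℝ → E × E := fun z => fderiv ℝ u z (0, 1) with hutdef
  have hus : ContDiff ℝ 1 us := hU'.clm_apply contDiff_const
  have hut' : ContDiff ℝ 1 ut := hU'.clm_apply contDiff_const
  set P : ℝ × ℝ → E := fun z => (u z).2 with hPdef
  have hP : ContDiff ℝ 1 P := contDiff_snd.comp hu1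
  set a : ℝ × ℝ → ℝ := fun z => ⟪P z, (ut z).1⟫ with hadef
  set cc : ℝ × ℝ → ℝ := fun z => ⟪P z, (us z).1⟫ with hccdef
  set hh : ℝ × ℝ → ℝ := fun z => H z.2 (u z) with hhhdef
  have ha : ContDiff ℝ 1 a := ContDiff.inner ℝ hP (contDiff_fst.comp hut')
  have hcc : ContDiff ℝ 1 cc := ContDiff.inner ℝ hP (contDiff_fst.comp hus)
  have hhh : ContDiff ℝ 1 hh := hH.comp (contDiff_snd.prodMk hu1)
  set A : ℝ × ℝ → ℝ := fun z => a z - hh z with hAdef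
  have hA : ContDiff ℝ 1 A := ha.sub hhh
  have hHdiff : Differentiable ℝ (Function.uncurry H) := hH.differentiable one_ne_zero
  -- partial derivative of H in the fiber directions
  have hHpart : ∀ (t : ℝ) (w v : E × E),
      fderiv ℝ (H t) w v = fderiv ℝ (Function.uncurry H) (t, w) (0, v) := by
    intro t w v
    have h1 : HasFDerivAt (H t)
        ((fderiv ℝ (Function.uncurry H) (t, w)).comp
          (ContinuousLinearMap.inr ℝ ℝ (E × E))) w :=
      (hHdiff (t, w)).hasFDerivAt.comp w (hasFDerivAt_prodMk_right t w)
    rw [h1.fderiv]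
    rfl
  -- derivatives of the building blocks
  have hfP : ∀ z w, fderiv ℝ P z w = (fderiv ℝ u z w).2 := by
    intro z w
    have h1 : HasFDerivAt P ((ContinuousLinearMap.snd ℝ E E).comp (fderiv ℝ u z)) z :=
      (ContinuousLinearMap.snd ℝ E E).hasFDerivAt.comp z (hudiff z).hasFDerivAt
    rw [h1.fderiv]
    rfl
  have hfut : ∀ z w, fderiv ℝ ut z w = (fderiv ℝ (fderiv ℝ u) z w) (0, 1) := by
    intro z w
    have h1 : HasFDerivAt ut
        ((ContinuousLinearMap.apply ℝ (E × E) ((0:ℝ), (1:ℝ))).comp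
          (fderiv ℝ (fderiv ℝ u) z)) z :=
      (ContinuousLinearMap.apply ℝ (E × E) ((0:ℝ), (1:ℝ))).hasFDerivAt.comp z
        (hU'diff z).hasFDerivAt
    rw [h1.fderiv]
    rfl
  have hfus : ∀ z w, fderiv ℝ us z w = (fderiv ℝ (fderiv ℝ u) z w) (1, 0) := by
    intro z w
    have h1 : HasFDerivAt us
        ((ContinuousLinearMap.apply ℝ (E × E) ((1:ℝ), (0:ℝ))).comp
          (fderiv ℝ (fderiv ℝ u) z)) z :=
      (ContinuousLinearMap.apply ℝ (E × E) ((1:ℝ), (0:ℝ))).hasFDerivAt.comp z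
        (hU'diff z).hasFDerivAt
    rw [h1.fderiv]
    rfl
  have hfutfst : ∀ z w, fderiv ℝ (fun z => (ut z).1) z w = (fderiv ℝ ut z w).1 := by
    intro z w
    have h1 : HasFDerivAt (fun z => (ut z).1)
        ((ContinuousLinearMap.fst ℝ E E).comp (fderiv ℝ ut z)) z :=
      (ContinuousLinearMap.fst ℝ E E).hasFDerivAt.comp z
        ((hut'.differentiable one_ne_zero) z).hasFDerivAt
    rw [h1.fderiv]
    rfl
  have hfusfst : ∀ z w, fderiv ℝ (fun z => (us z).1) z w = (fderiv ℝ us z w).1 := by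
    intro z w
    have h1 : HasFDerivAt (fun z => (us z).1)
        ((ContinuousLinearMap.fst ℝ E E).comp (fderiv ℝ us z)) z :=
      (ContinuousLinearMap.fst ℝ E E).hasFDerivAt.comp z
        ((hus.differentiable one_ne_zero) z).hasFDerivAt
    rw [h1.fderiv]
    rfl
  have hfa : ∀ z, fderiv ℝ a z (1, 0)
      = ⟪P z, ((fderiv ℝ (fderiv ℝ u) z ((1:ℝ), (0:ℝ))) (0, 1)).1⟫
        + ⟪(us z).2, (ut z).1⟫ := by
    intro z
    have hd1 : DifferentiableAt ℝ P z := (hP.differentiable one_ne_zero) z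
    have hd2 : DifferentiableAt ℝ (fun z => (ut z).1) z :=
      ((contDiff_fst.comp hut').differentiable one_ne_zero) z
    have h1 := fderiv_inner_apply ℝ hd1 hd2 ((1:ℝ), (0:ℝ))
    rw [hadef]
    rw [h1, hfP, hfutfst, hfut]
  have hfcc : ∀ z, fderiv ℝ cc z (0, 1)
      = ⟪P z, ((fderiv ℝ (fderiv ℝ u) z ((0:ℝ), (1:ℝ))) (1, 0)).1⟫
        + ⟪(ut z).2, (us z).1⟫ := by
    intro z
    have hd1 : DifferentiableAt ℝ P z := (hP.differentiable one_ne_zero) z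
    have hd2 : DifferentiableAt ℝ (fun z => (us z).1) z :=
      ((contDiff_fst.comp hus).differentiable one_ne_zero) z
    have h1 := fderiv_inner_apply ℝ hd1 hd2 ((0:ℝ), (1:ℝ))
    rw [hccdef]
    rw [h1, hfP, hfusfst, hfus]
  have hsymm : ∀ z : ℝ × ℝ, (fderiv ℝ (fderiv ℝ u) z ((1:ℝ), (0:ℝ))) ((0:ℝ), (1:ℝ))
      = (fderiv ℝ (fderiv ℝ u) z ((0:ℝ), (1:ℝ))) ((1:ℝ), (0:ℝ)) := by
    intro z
    exact second_derivative_symmetric (fun y => (hudiff y).hasFDerivAt)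
      ((hU'diff z).hasFDerivAt) _ _
  have hfhh : ∀ z : ℝ × ℝ, fderiv ℝ hh z (1, 0) = fderiv ℝ (H z.2) (u z) (us z) := by
    intro z
    have hΦ : HasFDerivAt (fun y : ℝ × ℝ => (y.2, u y))
        ((ContinuousLinearMap.snd ℝ ℝ ℝ).prod (fderiv ℝ u z)) z :=
      (hasFDerivAt_snd).prodMk (hudiff z).hasFDerivAt
    have h1 : HasFDerivAt hh
        ((fderiv ℝ (Function.uncurry H) (z.2, u z)).comp
          ((ContinuousLinearMap.snd ℝ ℝ ℝ).prod (fderiv ℝ u z))) z :=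
      by have := (hHdiff (z.2, u z)).hasFDerivAt.comp z hΦ; exact this
    rw [h1.fderiv]
    have h2 : ((ContinuousLinearMap.snd ℝ ℝ ℝ).prod (fderiv ℝ u z)) ((1:ℝ), (0:ℝ))
        = ((0:ℝ), us z) := by
      rw [husdef]
      rfl
    rw [ContinuousLinearMap.comp_apply, h2]
    exact (hHpart z.2 (u z) (us z)).symm
  have hfA : ∀ z : ℝ × ℝ, fderiv ℝ A z (1, 0)
      = fderiv ℝ a z (1, 0) - fderiv ℝ hh z (1, 0) := by
    intro z
    have h1 : fderiv ℝ A z = fderiv ℝ a z - fderiv ℝ hh z := by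
      rw [hAdef]
      exact fderiv_sub ((ha.differentiable one_ne_zero) z) ((hhh.differentiable one_ne_zero) z)
    rw [h1]
    rfl
  -- the key pointwise identity on the strip
  have hkey : ∀ z : ℝ × ℝ, z.1 ∈ Icc (0:ℝ) ℓ →
      stdOmega (us z) (J z.2 (u z) (us z))
        = fderiv ℝ A z (1, 0) - fderiv ℝ cc z (0, 1) := by
    intro z hz
    have hF := hFloer z.1 hz z.2
    rw [Prod.mk.eta] at hF
    have h1 : J z.2 (u z) (ut z - X z.2 (u z)) = - us z :=
      eq_neg_of_add_eq_zero_right hF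
    have h2 : ut z - X z.2 (u z) = J z.2 (u z) (us z) := by
      have h3 := congrArg (J z.2 (u z)) h1
      rw [hJsq z.2 (u z) (ut z - X z.2 (u z)), (J z.2 (u z)).map_neg] at h3
      exact neg_injective h3
    calc stdOmega (us z) (J z.2 (u z) (us z))
        = stdOmega (us z) (ut z - X z.2 (u z)) := by rw [← h2]
      _ = stdOmega (us z) (ut z) - stdOmega (us z) (X z.2 (u z)) :=
          stdOmega_sub_right _ _ _
      _ = stdOmega (us z) (ut z) - fderiv ℝ (H z.2) (u z) (us z) := by
          rw [stdOmega_skew (us z) (X z.2 (u z)), hX]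
          ring
      _ = fderiv ℝ A z (1, 0) - fderiv ℝ cc z (0, 1) := by
          rw [hfA z, hfa z, hfcc z, hfhh z, hsymm z]
          simp only [stdOmega]
          rw [real_inner_comm (ut z).2 (us z).1]
          ring
  -- derivative facts along vertical/horizontal lines
  have hφA : ∀ (t s : ℝ), HasDerivAt (fun s' => A (s', t)) (fderiv ℝ A (s, t) (1, 0)) s := by
    intro t s
    have h1 : HasDerivAt (fun s' : ℝ => (s', t)) ((1:ℝ), (0:ℝ)) s :=
      (hasDerivAt_id s).prodMk (hasDerivAt_const s t)
    exact ((hA.differentiable one_ne_zero) (s, t)).hasFDerivAt.comp_hasDerivAt s h1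
  have hφcc : ∀ (s t : ℝ), HasDerivAt (fun t' => cc (s, t')) (fderiv ℝ cc (s, t) (0, 1)) t := by
    intro s t
    have h1 : HasDerivAt (fun t' : ℝ => (s, t')) ((0:ℝ), (1:ℝ)) t :=
      (hasDerivAt_const t s).prodMk (hasDerivAt_id t)
    exact ((hcc.differentiable one_ne_zero) (s, t)).hasFDerivAt.comp_hasDerivAt t h1
  -- continuity of the derivative integrands
  have hfAcont : Continuous fun z : ℝ × ℝ => fderiv ℝ A z (1, 0) :=
    (hA.continuous_fderiv one_ne_zero).clm_apply continuous_const
  have hfcccont : Continuous fun z : ℝ × ℝ => fderiv ℝ cc z (0, 1) :=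
    (hcc.continuous_fderiv one_ne_zero).clm_apply continuous_const
  -- inner integral computation
  have hinner : ∀ t : ℝ, (∫ s in (0:ℝ)..ℓ,
        stdOmega (fderiv ℝ u (s, t) (1, 0)) (J t (u (s, t)) (fderiv ℝ u (s, t) (1, 0))))
      = (A (ℓ, t) - A (0, t)) - ∫ s in (0:ℝ)..ℓ, fderiv ℝ cc (s, t) (0, 1) := by
    intro t
    have hI1 : IntervalIntegrable (fun s => fderiv ℝ A (s, t) (1, 0)) volume 0 ℓ :=
      (hfAcont.comp (continuous_id.prodMk continuous_const)).intervalIntegrable _ _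
    have hI2 : IntervalIntegrable (fun s => fderiv ℝ cc (s, t) (0, 1)) volume 0 ℓ :=
      (hfcccont.comp (continuous_id.prodMk continuous_const)).intervalIntegrable _ _
    have hcongr : (∫ s in (0:ℝ)..ℓ,
          stdOmega (fderiv ℝ u (s, t) (1, 0)) (J t (u (s, t)) (fderiv ℝ u (s, t) (1, 0))))
        = ∫ s in (0:ℝ)..ℓ, (fderiv ℝ A (s, t) (1, 0) - fderiv ℝ cc (s, t) (0, 1)) := by
      apply intervalIntegral.integral_congr
      intro s hs
      rw [uIcc_of_le hℓ.le] at hs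
      exact hkey (s, t) hs
    rw [hcongr, intervalIntegral.integral_sub hI1 hI2]
    congr 1
    exact intervalIntegral.integral_eq_sub_of_hasDerivAt (fun s _ => hφA t s) hI1
  -- periodicity in t
  have hU'per : ∀ s t : ℝ, fderiv ℝ u (s, t + 1) = fderiv ℝ u (s, t) := by
    intro s t
    have h0 : HasFDerivAt (fun y : ℝ × ℝ => (y.1, y.2 + 1))
        (ContinuousLinearMap.id ℝ (ℝ × ℝ)) (s, t) := by
      have h0' : HasFDerivAt (fun y : ℝ × ℝ => y + ((0:ℝ), (1:ℝ)))
          (ContinuousLinearMap.id ℝ (ℝ × ℝ)) (s, t) :=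
        (hasFDerivAt_id (𝕜 := ℝ) ((s, t) : ℝ × ℝ)).add_const (((0:ℝ), (1:ℝ)))
      have heq : (fun y : ℝ × ℝ => y + ((0:ℝ), (1:ℝ)))
          = fun y : ℝ × ℝ => (y.1, y.2 + 1) := by
        funext y
        rw [Prod.ext_iff]
        constructor
        · simp
        · rfl
      rwa [heq] at h0'
    have h1 : HasFDerivAt (u ∘ fun y : ℝ × ℝ => (y.1, y.2 + 1))
        ((fderiv ℝ u (s, t + 1)).comp (ContinuousLinearMap.id ℝ (ℝ × ℝ))) (s, t) :=
      HasFDerivAt.comp (s, t) (hudiff (s, t + 1)).hasFDerivAt h0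
    have hfun : (u ∘ fun y : ℝ × ℝ => (y.1, y.2 + 1)) = u := by
      funext y
      exact huper y.1 y.2
    rw [hfun] at h1
    have h2 := h1.fderiv
    rw [ContinuousLinearMap.comp_id] at h2
    exact h2.symm
  have hccper : ∀ s t : ℝ, cc (s, t + 1) = cc (s, t) := by
    intro s t
    rw [hccdef]
    simp only [hPdef, husdef, huper s t, hU'per s t]
  -- the t-integral of the cc-derivative vanishes
  have htzero : ∀ s : ℝ, (∫ t in (0:ℝ)..1, fderiv ℝ cc (s, t) (0, 1)) = 0 := by
    intro s
    have hI : IntervalIntegrable (fun t => fderiv ℝ cc (s, t) (0, 1)) volume 0 1 :=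
      (hfcccont.comp (continuous_const.prodMk continuous_id)).intervalIntegrable _ _
    have hFTC := intervalIntegral.integral_eq_sub_of_hasDerivAt
      (f := fun t' => cc (s, t')) (fun t _ => hφcc s t) hI
    rw [hFTC]
    show cc (s, 1) - cc (s, 0) = 0
    have hper := hccper s 0
    rw [zero_add] at hper
    rw [hper, sub_self]
  -- Fubini: the double integral of the cc-derivative vanishes
  have hdouble : (∫ t in (0:ℝ)..1, ∫ s in (0:ℝ)..ℓ, fderiv ℝ cc (s, t) (0, 1)) = 0 := by
    have hGc : Continuous (Function.uncurry fun t s : ℝ => fderiv ℝ cc (s, t) (0, 1)) :=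
      hfcccont.comp (continuous_snd.prodMk continuous_fst)
    have hInt : Integrable (Function.uncurry fun t s : ℝ => fderiv ℝ cc (s, t) (0, 1))
        ((volume.restrict (Ioc (0:ℝ) 1)).prod (volume.restrict (Ioc (0:ℝ) ℓ))) := by
      rw [Measure.prod_restrict]
      have h1 : IntegrableOn (Function.uncurry fun t s : ℝ => fderiv ℝ cc (s, t) (0, 1))
          (Icc (0:ℝ) 1 ×ˢ Icc (0:ℝ) ℓ) volume :=
        hGc.continuousOn.integrableOn_compact (isCompact_Icc.prod isCompact_Icc)
      have h2 := h1.mono_set (Set.prod_mono Ioc_subset_Icc_self Ioc_subset_Icc_self)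
      rwa [Measure.volume_eq_prod] at h2
    have e1 : (∫ t in (0:ℝ)..1, ∫ s in (0:ℝ)..ℓ, fderiv ℝ cc (s, t) (0, 1))
        = ∫ t in Ioc (0:ℝ) 1, ∫ s in Ioc (0:ℝ) ℓ, fderiv ℝ cc (s, t) (0, 1) := by
      simp only [intervalIntegral.integral_of_le hℓ.le,
        intervalIntegral.integral_of_le (zero_le_one : (0:ℝ) ≤ 1)]
    have e2 := MeasureTheory.integral_integral_swap hInt
    have e3 : ∀ s : ℝ, (∫ t in Ioc (0:ℝ) 1, fderiv ℝ cc (s, t) (0, 1)) = 0 := by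
      intro s
      rw [← intervalIntegral.integral_of_le (zero_le_one : (0:ℝ) ≤ 1)]
      exact htzero s
    rw [e1]
    rw [show (∫ t in Ioc (0:ℝ) 1, ∫ s in Ioc (0:ℝ) ℓ, fderiv ℝ cc (s, t) (0, 1))
        = ∫ s in Ioc (0:ℝ) ℓ, ∫ t in Ioc (0:ℝ) 1, fderiv ℝ cc (s, t) (0, 1) from e2]
    simp only [e3]
    simp
  -- final assembly
  have hAcontl : Continuous fun t : ℝ => A (ℓ, t) - A (0, t) := by
    apply Continuous.sub
    · exact (hA.continuous).comp (continuous_const.prodMk continuous_id)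
    · exact (hA.continuous).comp (continuous_const.prodMk continuous_id)
  have hparam : Continuous fun t : ℝ => ∫ s in (0:ℝ)..ℓ, fderiv ℝ cc (s, t) (0, 1) := by
    apply intervalIntegral.continuous_parametric_intervalIntegral_of_continuous'
    exact hfcccont.comp (continuous_snd.prodMk continuous_fst)
  calc (∫ t in (0:ℝ)..1, ∫ s in (0:ℝ)..ℓ,
        stdOmega (fderiv ℝ u (s, t) (1, 0)) (J t (u (s, t)) (fderiv ℝ u (s, t) (1, 0))))
      = ∫ t in (0:ℝ)..1,
          ((A (ℓ, t) - A (0, t)) - ∫ s in (0:ℝ)..ℓ, fderiv ℝ cc (s, t) (0, 1)) := by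
        apply intervalIntegral.integral_congr
        intro t _
        exact hinner t
    _ = (∫ t in (0:ℝ)..1, (A (ℓ, t) - A (0, t)))
        - ∫ t in (0:ℝ)..1, ∫ s in (0:ℝ)..ℓ, fderiv ℝ cc (s, t) (0, 1) :=
        intervalIntegral.integral_sub (hAcontl.intervalIntegrable _ _)
          (hparam.intervalIntegrable _ _)
    _ = ∫ t in (0:ℝ)..1, (A (ℓ, t) - A (0, t)) := by rw [hdouble, sub_zero]
    _ = ∫ t in (0:ℝ)..1,
        ((⟪(u (ℓ, t)).2, (fderiv ℝ u (ℓ, t) (0, 1)).1⟫ - H t (u (ℓ, t)))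
          - (⟪(u (0, t)).2, (fderiv ℝ u (0, t) (0, 1)).1⟫ - H t (u (0, t)))) := by
        apply intervalIntegral.integral_congr
        intro t _
        simp only [hAdef, hadef, hhhdef, hPdef, hutdef]

end Aux4
/-- Lemma 1.4 of the paper (a priori energy bound): for a Hamiltonian which is
sufficiently negative for the base loop `b` and the fiberwise star-shaped
domain `Ω = {r ≤ 1}`, the quantity `κ` is finite and nonpositive, and every
finite-length Floer cylinder whose left end lifts `b` and whose right end lies
on the zero section satisfies
`E(u) ≤ ∫₀¹ max_{Ω ∩ fiber} H_t dt − ∫₀¹ m(t) dt − κ`. -/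
theorem stmt_14 (n : ℕ)
    (r : EuclideanSpace ℝ (Fin n) → EuclideanSpace ℝ (Fin n) → ℝ)
    (hrcont : Continuous (fun z : EuclideanSpace ℝ (Fin n) × EuclideanSpace ℝ (Fin n) => r z.1 z.2))
    (hrnonneg : ∀ q p, 0 ≤ r q p)
    (hrpos : ∀ q p, p ≠ 0 → 0 < r q p)
    (hrhom : ∀ q p, ∀ c : ℝ, 0 ≤ c → r q (c • p) = c * r q p)
    (H : ℝ → (EuclideanSpace ℝ (Fin n) × EuclideanSpace ℝ (Fin n)) → ℝ)
    (hH : ContDiff ℝ 1 (Function.uncurry H))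
    (hHper : ∀ z, Function.Periodic (fun t => H t z) 1)
    (hHhom : ∀ t q p, ∀ s : ℝ, 0 ≤ s → 1 ≤ r q p →
      H t (q, Real.exp s • p) = Real.exp s * H t (q, p))
    -- `m(t) = inf_q H(t, q, 0)` is finite and integrable
    (hm : ∀ t : ℝ, BddBelow (Set.range fun q : EuclideanSpace ℝ (Fin n) => H t (q, 0)))
    (hmint : IntervalIntegrable
      (fun t => sInf (Set.range fun q : EuclideanSpace ℝ (Fin n) => H t (q, 0)))
      volume 0 1)
    (b : ℝ → EuclideanSpace ℝ (Fin n))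
    (hb : ContDiff ℝ 1 b) (hbper : Function.Periodic b 1)
    -- `H` is sufficiently negative for `b` and `Ω`
    (hneg : ∀ p : ℝ → EuclideanSpace ℝ (Fin n), Continuous p → Function.Periodic p 1 →
      (∀ t, 1 < r (b t) (p t)) →
      (∫ t in (0:ℝ)..1, H t (b t, p t)) - (∫ t in (0:ℝ)..1, ⟪p t, deriv b t⟫) ≤ 0)
    -- the Hamiltonian vector field, characterized by `ω(X_H, ·) = −dH`
    (X : ℝ → (EuclideanSpace ℝ (Fin n) × EuclideanSpace ℝ (Fin n)) →
      (EuclideanSpace ℝ (Fin n) × EuclideanSpace ℝ (Fin n)))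
    (hX : ∀ t z v, stdOmega (X t z) v = -(fderiv ℝ (H t) z v)) :
    -- `κ` is finite …
    BddBelow {x : ℝ | ∃ p : ℝ → EuclideanSpace ℝ (Fin n),
        Continuous p ∧ Function.Periodic p 1 ∧ (∀ t, r (b t) (p t) ≤ 1) ∧
        x = ∫ t in (0:ℝ)..1, ⟪p t, deriv b t⟫} ∧
    -- … and `κ ≤ 0` …
    sInf {x : ℝ | ∃ p : ℝ → EuclideanSpace ℝ (Fin n),
        Continuous p ∧ Function.Periodic p 1 ∧ (∀ t, r (b t) (p t) ≤ 1) ∧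
        x = ∫ t in (0:ℝ)..1, ⟪p t, deriv b t⟫} ≤ 0 ∧
    -- … and the a priori energy bound holds:
    ∀ J : ℝ → (EuclideanSpace ℝ (Fin n) × EuclideanSpace ℝ (Fin n)) →
        ((EuclideanSpace ℝ (Fin n) × EuclideanSpace ℝ (Fin n)) →L[ℝ]
          (EuclideanSpace ℝ (Fin n) × EuclideanSpace ℝ (Fin n))),
      ContDiff ℝ (⊤ : ℕ∞) (fun z : ℝ ×
        (EuclideanSpace ℝ (Fin n) × EuclideanSpace ℝ (Fin n)) => J z.1 z.2) →
      (∀ z, Function.Periodic (fun t => J t z) 1) →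
      (∀ t z v, J t z (J t z v) = -v) →
      (∀ t z v, v ≠ 0 → 0 < stdOmega v (J t z v)) →
      ∀ ℓ : ℝ, 0 < ℓ →
      ∀ u : ℝ × ℝ → EuclideanSpace ℝ (Fin n) × EuclideanSpace ℝ (Fin n),
        ContDiff ℝ (⊤ : ℕ∞) u →
        (∀ s t, u (s, t + 1) = u (s, t)) →
        -- Floer's equation `∂ₛu + J_t(u)(∂ₜu − X_{H_t}(u)) = 0`
        (∀ s ∈ Icc (0:ℝ) ℓ, ∀ t : ℝ,
          fderiv ℝ u (s, t) (1, 0) +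
            J t (u (s, t)) (fderiv ℝ u (s, t) (0, 1) - X t (u (s, t))) = 0) →
        -- left end lifts `b`, right end lies on the zero section
        (∀ t, (u (0, t)).1 = b t) →
        (∀ t, (u (ℓ, t)).2 = 0) →
        (∫ t in (0:ℝ)..1, ∫ s in (0:ℝ)..ℓ,
            stdOmega (fderiv ℝ u (s, t) (1, 0))
              (J t (u (s, t)) (fderiv ℝ u (s, t) (1, 0))))
          ≤ (∫ t in (0:ℝ)..1,
                sSup {x : ℝ | ∃ p : EuclideanSpace ℝ (Fin n),
                  r (b t) p ≤ 1 ∧ x = H t (b t, p)})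
            - (∫ t in (0:ℝ)..1,
                sInf (Set.range fun q : EuclideanSpace ℝ (Fin n) => H t (q, 0)))
            - sInf {x : ℝ | ∃ p : ℝ → EuclideanSpace ℝ (Fin n),
                Continuous p ∧ Function.Periodic p 1 ∧ (∀ t', r (b t') (p t') ≤ 1) ∧
                x = ∫ t' in (0:ℝ)..1, ⟪p t', deriv b t'⟫} := by
  obtain ⟨C, hCpos, hC⟩ := aux_bound r hrcont hrpos hrhom b hb.continuous
  have hb' : Continuous (deriv b) := hb.continuous_deriv le_rfl
  obtain ⟨B, hB⟩ : ∃ B : ℝ, ∀ t ∈ Icc (0:ℝ) 1, ‖deriv b t‖ ≤ B :=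
    (isCompact_Icc (a := (0:ℝ)) (b := 1)).exists_bound_of_continuousOn hb'.continuousOn
  have hBnn : 0 ≤ B := le_trans (norm_nonneg _) (hB 0 (by norm_num))
  set S : Set ℝ := {x : ℝ | ∃ p : ℝ → EuclideanSpace ℝ (Fin n),
      Continuous p ∧ Function.Periodic p 1 ∧ (∀ t, r (b t) (p t) ≤ 1) ∧
      x = ∫ t in (0:ℝ)..1, ⟪p t, deriv b t⟫} with hSdef
  have hSlb : ∀ x ∈ S, -(C * B) ≤ x := by
    rintro x ⟨p, hpc, hpper, hpr, rfl⟩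
    have hpt : ∀ t ∈ Icc (0:ℝ) 1, -(C * B) ≤ ⟪p t, deriv b t⟫ := by
      intro t ht
      have h1 : |⟪p t, deriv b t⟫| ≤ ‖p t‖ * ‖deriv b t‖ := abs_real_inner_le_norm _ _
      have h2 : ‖p t‖ ≤ C := hC t ht (p t) (hpr t)
      have h3 : ‖deriv b t‖ ≤ B := hB t ht
      have h4 : ‖p t‖ * ‖deriv b t‖ ≤ C * B := mul_le_mul h2 h3 (norm_nonneg _) hCpos.le
      linarith [(abs_le.1 (h1.trans h4)).1]
    calc -(C * B) = ∫ _ in (0:ℝ)..1, (-(C * B) : ℝ) := by simp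
      _ ≤ ∫ t in (0:ℝ)..1, ⟪p t, deriv b t⟫ :=
        intervalIntegral.integral_mono_on zero_le_one intervalIntegrable_const
          ((continuous_inner.comp (hpc.prodMk hb')).intervalIntegrable _ _) hpt
  have hSbdd : BddBelow S := ⟨-(C * B), hSlb⟩
  have h0S : (0:ℝ) ∈ S := by
    refine ⟨fun _ => 0, continuous_const, fun t => rfl, fun t => ?_, ?_⟩
    · rw [aux_r_zero r hrhom (b t)]
      exact zero_le_one
    · simp
  have hκ0 : sInf S ≤ 0 := csInf_le hSbdd h0S
  refine ⟨hSbdd, hκ0, ?_⟩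
  intro J hJc hJper hJsq hJtame ℓ hℓ u hu huper hFloer hu0 huℓ
  obtain ⟨M, hMc, hMeq, hMub⟩ :=
    aux_M r hrcont hrhom H hH.continuous b hb.continuous C hCpos hC
  have hpoint := aux_pointwise r hrcont hrpos hrhom H hH hHper hHhom b hb hbper hneg
  set m : ℝ → ℝ := fun t =>
    sInf (Set.range fun q : EuclideanSpace ℝ (Fin n) => H t (q, 0)) with hmdef
  set p₀ : ℝ → EuclideanSpace ℝ (Fin n) := fun t => (u (0, t)).2 with hp₀def
  have hp₀c : Continuous p₀ :=
    continuous_snd.comp (hu.continuous.comp (continuous_const.prodMk continuous_id))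
  have hp₀per : Function.Periodic p₀ 1 := by
    intro t
    simp only [hp₀def, huper 0 t]
  have hmaxpos : ∀ t, 0 < max 1 (r (b t) (p₀ t)) := fun t => lt_max_of_lt_left one_pos
  set pbar : ℝ → EuclideanSpace ℝ (Fin n) :=
    fun t => (max 1 (r (b t) (p₀ t)))⁻¹ • p₀ t with hpbardef
  have hrbp₀ : Continuous fun t => r (b t) (p₀ t) :=
    hrcont.comp ((hb.continuous).prodMk hp₀c)
  have hpbarc : Continuous pbar :=
    ((continuous_const.max hrbp₀).inv₀ (fun t => (hmaxpos t).ne')).smul hp₀c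
  have hpbarper : Function.Periodic pbar 1 := by
    intro t
    simp only [hpbardef, hp₀per t, hbper t]
  have hpbarr : ∀ t, r (b t) (pbar t) ≤ 1 := by
    intro t
    simp only [hpbardef]
    rw [hrhom _ _ _ (inv_nonneg.2 (hmaxpos t).le)]
    calc (max 1 (r (b t) (p₀ t)))⁻¹ * r (b t) (p₀ t)
        ≤ (max 1 (r (b t) (p₀ t)))⁻¹ * max 1 (r (b t) (p₀ t)) :=
          mul_le_mul_of_nonneg_left (le_max_right _ _) (inv_nonneg.2 (hmaxpos t).le)
      _ = 1 := inv_mul_cancel₀ (hmaxpos t).ne'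
  have hpbarS : (∫ t in (0:ℝ)..1, ⟪pbar t, deriv b t⟫) ∈ S :=
    ⟨pbar, hpbarc, hpbarper, hpbarr, rfl⟩
  have hκle : sInf S ≤ ∫ t in (0:ℝ)..1, ⟪pbar t, deriv b t⟫ := csInf_le hSbdd hpbarS
  have hud : Differentiable ℝ u := (hu.of_le (by simp)).differentiable one_ne_zero
  have hderb : ∀ t, (fderiv ℝ u (0, t) (0, 1)).1 = deriv b t := by
    intro t
    have h1 : HasDerivAt (fun t' : ℝ => ((0 : ℝ), t')) (((0:ℝ), (1:ℝ)) : ℝ × ℝ) t :=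
      (hasDerivAt_const t (0:ℝ)).prodMk (hasDerivAt_id t)
    have h2 : HasDerivAt (fun t' => u (0, t')) (fderiv ℝ u (0, t) (0, 1)) t :=
      (hud (0, t)).hasFDerivAt.comp_hasDerivAt t h1
    have h3 : HasDerivAt (fun t' => (u (0, t')).1) ((fderiv ℝ u (0, t) (0, 1)).1) t :=
      ((ContinuousLinearMap.fst ℝ (EuclideanSpace ℝ (Fin n))
        (EuclideanSpace ℝ (Fin n))).hasFDerivAt).comp_hasDerivAt t h2
    have h4 : (fun t' => (u (0, t')).1) = b := funext hu0
    rw [h4] at h3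
    exact h3.deriv.symm
  have hE := aux_energy H hH X hX J hJsq ℓ hℓ u hu huper hFloer
  rw [hE]
  have hMrw : (∫ t in (0:ℝ)..1,
      sSup {x : ℝ | ∃ p : EuclideanSpace ℝ (Fin n), r (b t) p ≤ 1 ∧ x = H t (b t, p)})
      = ∫ t in (0:ℝ)..1, M t := by
    apply intervalIntegral.integral_congr
    intro t ht
    rw [uIcc_of_le zero_le_one] at ht
    exact (hMeq t ht).symm
  rw [hMrw]
  have hptbd : ∀ t ∈ Icc (0:ℝ) 1,
      ((⟪(u (ℓ, t)).2, (fderiv ℝ u (ℓ, t) (0, 1)).1⟫ - H t (u (ℓ, t)))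
        - (⟪(u (0, t)).2, (fderiv ℝ u (0, t) (0, 1)).1⟫ - H t (u (0, t))))
      ≤ M t - m t - ⟪pbar t, deriv b t⟫ := by
    intro t ht
    have hz : (u (ℓ, t)).2 = 0 := huℓ t
    have e1 : ⟪(u (ℓ, t)).2, (fderiv ℝ u (ℓ, t) (0, 1)).1⟫ = 0 := by
      rw [hz]
      exact inner_zero_left _
    have e2 : u (ℓ, t) = ((u (ℓ, t)).1, (0 : EuclideanSpace ℝ (Fin n))) := by
      rw [← hz]
    have hm1 : m t ≤ H t (u (ℓ, t)) := by
      have : m t ≤ H t ((u (ℓ, t)).1, 0) := csInf_le (hm t) ⟨(u (ℓ, t)).1, rfl⟩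
      rwa [← e2] at this
    have e3 : u (0, t) = (b t, p₀ t) := by
      simp only [hp₀def]
      rw [← hu0 t]
    have e4 : ⟪(u (0, t)).2, (fderiv ℝ u (0, t) (0, 1)).1⟫ = ⟪p₀ t, deriv b t⟫ := by
      rw [hderb t]
    have hmain : H t (b t, p₀ t) - ⟪p₀ t, deriv b t⟫ ≤ M t - ⟪pbar t, deriv b t⟫ := by
      rcases le_or_gt (r (b t) (p₀ t)) 1 with hle | hgt
      · have hpb : pbar t = p₀ t := by
          simp only [hpbardef, max_eq_left hle, inv_one, one_smul]
        have := hMub t ht (p₀ t) hle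
        rw [hpb]
        linarith
      · have hρpos : (0:ℝ) < r (b t) (p₀ t) := lt_trans one_pos hgt
        have hmaxρ : max 1 (r (b t) (p₀ t)) = r (b t) (p₀ t) := max_eq_right hgt.le
        have hpb : pbar t = (r (b t) (p₀ t))⁻¹ • p₀ t := by
          simp only [hpbardef, hmaxρ]
        have hrpb : r (b t) (pbar t) = 1 := by
          rw [hpb, hrhom _ _ _ (inv_nonneg.2 hρpos.le), inv_mul_cancel₀ hρpos.ne']
        have hφ := hpoint t (pbar t) hrpb
        have hsmul : r (b t) (p₀ t) • pbar t = p₀ t := by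
          rw [hpb, smul_smul, mul_inv_cancel₀ hρpos.ne', one_smul]
        have hexp : Real.exp (Real.log (r (b t) (p₀ t))) = r (b t) (p₀ t) :=
          Real.exp_log hρpos
        have hhom := hHhom t (b t) (pbar t) (Real.log (r (b t) (p₀ t)))
          (Real.log_nonneg hgt.le) (le_of_eq hrpb.symm)
        rw [hexp, hsmul] at hhom
        have hinner2 : ⟪p₀ t, deriv b t⟫ = r (b t) (p₀ t) * ⟪pbar t, deriv b t⟫ := by
          conv_lhs => rw [← hsmul]
          rw [real_inner_smul_left]
        have hMpb : H t (b t, pbar t) ≤ M t := hMub t ht (pbar t) hrpb.le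
        rw [hhom, hinner2]
        nlinarith
    rw [e1, e4]
    rw [e3]
    linarith
  have hΦc : Continuous fun t : ℝ =>
      ((⟪(u (ℓ, t)).2, (fderiv ℝ u (ℓ, t) (0, 1)).1⟫ - H t (u (ℓ, t)))
        - (⟪(u (0, t)).2, (fderiv ℝ u (0, t) (0, 1)).1⟫ - H t (u (0, t)))) := by
    have hU'c : Continuous (fderiv ℝ u) := hu.continuous_fderiv (by simp)
    have huc : Continuous u := hu.continuous
    have c1 : ∀ s₀ : ℝ, Continuous fun t : ℝ =>
        ⟪(u (s₀, t)).2, (fderiv ℝ u (s₀, t) (0, 1)).1⟫ - H t (u (s₀, t)) := by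
      intro s₀
      have hline : Continuous fun t : ℝ => ((s₀, t) : ℝ × ℝ) :=
        continuous_const.prodMk continuous_id
      apply Continuous.sub
      · apply Continuous.inner
        · exact continuous_snd.comp (huc.comp hline)
        · exact continuous_fst.comp
            (((hU'c.comp hline).clm_apply continuous_const))
      · exact hH.continuous.comp (continuous_id.prodMk (huc.comp hline))
    exact (c1 ℓ).sub (c1 0)
  have hIinner : IntervalIntegrable (fun t => ⟪pbar t, deriv b t⟫) volume 0 1 :=
    (continuous_inner.comp (hpbarc.prodMk hb')).intervalIntegrable _ _
  have hRHSint : IntervalIntegrable (fun t => M t - m t - ⟪pbar t, deriv b t⟫) volume 0 1 :=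
    ((hMc.intervalIntegrable 0 1).sub hmint).sub hIinner
  calc (∫ t in (0:ℝ)..1,
      ((⟪(u (ℓ, t)).2, (fderiv ℝ u (ℓ, t) (0, 1)).1⟫ - H t (u (ℓ, t)))
        - (⟪(u (0, t)).2, (fderiv ℝ u (0, t) (0, 1)).1⟫ - H t (u (0, t)))))
      ≤ ∫ t in (0:ℝ)..1, (M t - m t - ⟪pbar t, deriv b t⟫) :=
      intervalIntegral.integral_mono_on zero_le_one
        (hΦc.intervalIntegrable _ _) hRHSint hptbd
    _ = (∫ t in (0:ℝ)..1, M t) - (∫ t in (0:ℝ)..1, m t)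
        - ∫ t in (0:ℝ)..1, ⟪pbar t, deriv b t⟫ := by
      rw [intervalIntegral.integral_sub ((hMc.intervalIntegrable 0 1).sub hmint) hIinner,
        intervalIntegral.integral_sub (hMc.intervalIntegrable 0 1) hmint]
    _ ≤ (∫ t in (0:ℝ)..1, M t) - (∫ t in (0:ℝ)..1, m t) - sInf S := by
      linarith
end
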